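/- arXiv:1609.09341 — 6 statements merged into one kernel-verified Lean document; each statement's English description precedes it below -/
import Mathlib

section
/- Let T be a finite nonempty set and let u, û : T → ℝ satisfy |û(t) − u(t)| ≤ ε for every t ∈ T, where ε ≥ 0. Define the softmax (quantal response) distributions D(t) = exp(u(t)) / Σ_{i∈T} exp(u(i)) and D̄(t) = exp(û(t)) / Σ_{i∈T} exp(û(i)). Then for every t ∈ T, exp(−2ε)·D(t) ≤ D̄(t) ≤ exp(2ε)·D(t). -/
/-- Stability of the softmax (quantal response) distribution: if the utilities `û` are
within `ε` of `u` pointwise, then the induced softmax probabilities differ by at most a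
multiplicative factor of `exp (2ε)`. -/
theorem softmax_stability {T : Type*} [Fintype T] [Nonempty T]
    (u uh : T → ℝ) (ε : ℝ) (hε : 0 ≤ ε)
    (h : ∀ t, |uh t - u t| ≤ ε) :
    ∀ t : T,
      Real.exp (-(2 * ε)) * (Real.exp (u t) / ∑ i, Real.exp (u i)) ≤
        Real.exp (uh t) / ∑ i, Real.exp (uh i) ∧
      Real.exp (uh t) / ∑ i, Real.exp (uh i) ≤
        Real.exp (2 * ε) * (Real.exp (u t) / ∑ i, Real.exp (u i)) := by
  intro t
  have hS : (0:ℝ) < ∑ i, Real.exp (u i) :=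
    Finset.sum_pos (fun i _ => Real.exp_pos _) Finset.univ_nonempty
  have hSh : (0:ℝ) < ∑ i, Real.exp (uh i) :=
    Finset.sum_pos (fun i _ => Real.exp_pos _) Finset.univ_nonempty
  have hlo : ∀ i, Real.exp (-ε) * Real.exp (u i) ≤ Real.exp (uh i) := by
    intro i
    rw [← Real.exp_add]
    exact Real.exp_le_exp.2 (by linarith [(abs_le.1 (h i)).1])
  have hhi : ∀ i, Real.exp (uh i) ≤ Real.exp ε * Real.exp (u i) := by
    intro i
    rw [← Real.exp_add]
    exact Real.exp_le_exp.2 (by linarith [(abs_le.1 (h i)).2])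
  have hsumlo : Real.exp (-ε) * ∑ i, Real.exp (u i) ≤ ∑ i, Real.exp (uh i) := by
    rw [Finset.mul_sum]
    exact Finset.sum_le_sum fun i _ => hlo i
  have hsumhi : (∑ i, Real.exp (uh i)) ≤ Real.exp ε * ∑ i, Real.exp (u i) := by
    rw [Finset.mul_sum]
    exact Finset.sum_le_sum fun i _ => hhi i
  have he2 : Real.exp (-(2*ε)) * Real.exp ε = Real.exp (-ε) := by
    rw [← Real.exp_add]; ring_nf
  have he2' : Real.exp (2*ε) * Real.exp (-ε) = Real.exp ε := by
    rw [← Real.exp_add]; ring_nf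
  have hA := Real.exp_pos (u t)
  have hAh := Real.exp_pos (uh t)
  have hee := Real.exp_pos ε
  have hen := Real.exp_pos (-ε)
  constructor
  · rw [mul_div_assoc', div_le_div_iff₀ hS hSh]
    calc Real.exp (-(2*ε)) * Real.exp (u t) * ∑ i, Real.exp (uh i)
        ≤ Real.exp (-(2*ε)) * Real.exp (u t) * (Real.exp ε * ∑ i, Real.exp (u i)) :=
          mul_le_mul_of_nonneg_left hsumhi (by positivity)
      _ = (Real.exp (-ε) * Real.exp (u t)) * ∑ i, Real.exp (u i) := by rw [← he2]; ring
      _ ≤ Real.exp (uh t) * ∑ i, Real.exp (u i) :=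
          mul_le_mul_of_nonneg_right (hlo t) hS.le
  · rw [mul_div_assoc', div_le_div_iff₀ hSh hS]
    calc Real.exp (uh t) * ∑ i, Real.exp (u i)
        ≤ (Real.exp ε * Real.exp (u t)) * ∑ i, Real.exp (u i) :=
          mul_le_mul_of_nonneg_right (hhi t) hS.le
      _ = Real.exp (2*ε) * Real.exp (u t) * (Real.exp (-ε) * ∑ i, Real.exp (u i)) := by
          rw [← he2']; ring
      _ ≤ Real.exp (2*ε) * Real.exp (u t) * ∑ i, Real.exp (uh i) :=
          mul_le_mul_of_nonneg_left hsumlo (by positivity)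
end

section
/- Let T be a finite nonempty set of n targets. For each t ∈ T let u_t, û_t : [0,1] → ℝ be attacker utility functions and v_t : [0,1] → [−1,1] a defender utility function. For a strategy x ∈ [0,1]^T define the attack distribution D^x(t) = exp(u_t(x_t)) / Σ_{i∈T} exp(u_i(x_i)) and the predicted attack distribution D̄^x(t) = exp(û_t(x_t)) / Σ_{i∈T} exp(û_i(x_i)), and set V(x) = Σ_{t∈T} D^x(t)·v_t(x_t) and V̄(x) = Σ_{t∈T} D̄^x(t)·v_t(x_t). If there is ε with 0 ≤ ε ≤ 1/4 such that |û_t(p) − u_t(p)| ≤ ε for every t ∈ T and every p ∈ [0,1], then |V̄(x) − V(x)| ≤ 4ε for every x ∈ [0,1]^T. -/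
open Real Set

/-- The quantal (logit) response attack distribution induced by attacker utilities `u`
under defender strategy `x`. -/
noncomputable def attackDist {T : Type*} [Fintype T]
    (u : T → ℝ → ℝ) (x : T → ℝ) (t : T) : ℝ :=
  Real.exp (u t (x t)) / ∑ i, Real.exp (u i (x i))

/-- The defender's expected utility under strategy `x`, when the attacker with
utilities `u` responds via quantal response and the defender's utility at target `t`
is `v t`. -/
noncomputable def defenderUtil {T : Type*} [Fintype T]
    (u : T → ℝ → ℝ) (v : T → ℝ → ℝ) (x : T → ℝ) : ℝ :=
  ∑ t, attackDist u x t * v t (x t)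

/-- If the learned attacker utilities `uh` are uniformly within `ε ≤ 1/4` of the true
utilities `u` on `[0,1]`, then the predicted defender utility is within `4ε` of the true
defender utility, for every strategy `x ∈ [0,1]^T`. -/
theorem predicted_defender_utility_close {T : Type*} [Fintype T] [Nonempty T]
    (u uh : T → ℝ → ℝ) (v : T → ℝ → ℝ)
    (hv : ∀ t, ∀ p ∈ Set.Icc (0:ℝ) 1, v t p ∈ Set.Icc (-1:ℝ) 1)
    (ε : ℝ) (hε0 : 0 ≤ ε) (hε : ε ≤ 1/4)
    (hu : ∀ t, ∀ p ∈ Set.Icc (0:ℝ) 1, |uh t p - u t p| ≤ ε) :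
    ∀ x : T → ℝ, (∀ t, x t ∈ Set.Icc (0:ℝ) 1) →
      |defenderUtil uh v x - defenderUtil u v x| ≤ 4 * ε := by
  intro x hx
  set S := ∑ i, Real.exp (u i (x i)) with hSdef
  set Sh := ∑ i, Real.exp (uh i (x i)) with hShdef
  have hS : 0 < S := Finset.sum_pos (fun i _ => Real.exp_pos _) Finset.univ_nonempty
  have hSh : 0 < Sh := Finset.sum_pos (fun i _ => Real.exp_pos _) Finset.univ_nonempty
  have hterm : ∀ t, |uh t (x t) - u t (x t)| ≤ ε := fun t => hu t _ (hx t)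
  have hub : ∀ t, Real.exp (uh t (x t)) ≤ Real.exp ε * Real.exp (u t (x t)) := by
    intro t
    rw [← Real.exp_add]
    apply Real.exp_le_exp.mpr
    have := (abs_le.mp (hterm t)).2
    linarith
  have hlb : ∀ t, Real.exp (-ε) * Real.exp (u t (x t)) ≤ Real.exp (uh t (x t)) := by
    intro t
    rw [← Real.exp_add]
    apply Real.exp_le_exp.mpr
    have := (abs_le.mp (hterm t)).1
    linarith
  have hShub : Sh ≤ Real.exp ε * S := by
    rw [hShdef, hSdef, Finset.mul_sum]
    exact Finset.sum_le_sum fun i _ => hub i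
  have hShlb : Real.exp (-ε) * S ≤ Sh := by
    rw [hShdef, hSdef, Finset.mul_sum]
    exact Finset.sum_le_sum fun i _ => hlb i
  set c := Real.exp (2 * ε) - 1 with hcdef
  have hc4 : c ≤ 4 * ε := by
    have h1 : (-(2 * ε)) + 1 ≤ Real.exp (-(2 * ε)) := Real.add_one_le_exp _
    have h2 : Real.exp (2 * ε) * Real.exp (-(2 * ε)) = 1 := by
      rw [← Real.exp_add]; simp
    have h3 : (0:ℝ) < Real.exp (2 * ε) := Real.exp_pos _
    rw [hcdef]
    nlinarith [mul_le_mul_of_nonneg_left h1 (le_of_lt h3)]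
  have hDpos : ∀ t, 0 < attackDist u x t := fun t => div_pos (Real.exp_pos _) hS
  have hsymm : 2 ≤ Real.exp (2 * ε) + Real.exp (-(2 * ε)) := by
    have h1 : (2 * ε) + 1 ≤ Real.exp (2 * ε) := Real.add_one_le_exp _
    have h2 : (-(2 * ε)) + 1 ≤ Real.exp (-(2 * ε)) := Real.add_one_le_exp _
    linarith
  have hcnn : 0 ≤ c := by
    rw [hcdef]
    have := Real.add_one_le_exp (2 * ε)
    linarith
  have hdist : ∀ t, |attackDist uh x t - attackDist u x t| ≤ c * attackDist u x t := by
    intro t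
    have hupper : attackDist uh x t ≤ Real.exp (2 * ε) * attackDist u x t := by
      have step : Real.exp (uh t (x t)) / Sh
          ≤ (Real.exp ε * Real.exp (u t (x t))) / (Real.exp (-ε) * S) :=
        div_le_div₀ (by positivity) (hub t) (by positivity) hShlb
      have heq : (Real.exp ε * Real.exp (u t (x t))) / (Real.exp (-ε) * S)
          = Real.exp (2 * ε) * (Real.exp (u t (x t)) / S) := by
        rw [mul_div_mul_comm, ← Real.exp_sub]
        ring_nf
      calc attackDist uh x t = Real.exp (uh t (x t)) / Sh := rfl
        _ ≤ _ := step
        _ = Real.exp (2 * ε) * (Real.exp (u t (x t)) / S) := heq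
        _ = Real.exp (2 * ε) * attackDist u x t := rfl
    have hlower : Real.exp (-(2 * ε)) * attackDist u x t ≤ attackDist uh x t := by
      have step : (Real.exp (-ε) * Real.exp (u t (x t))) / (Real.exp ε * S)
          ≤ Real.exp (uh t (x t)) / Sh :=
        div_le_div₀ (by positivity) (hlb t) (by positivity) hShub
      have heq : (Real.exp (-ε) * Real.exp (u t (x t))) / (Real.exp ε * S)
          = Real.exp (-(2 * ε)) * (Real.exp (u t (x t)) / S) := by
        rw [mul_div_mul_comm, ← Real.exp_sub]
        ring_nf
      calc Real.exp (-(2 * ε)) * attackDist u x t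
          = (Real.exp (-ε) * Real.exp (u t (x t))) / (Real.exp ε * S) := heq.symm
        _ ≤ Real.exp (uh t (x t)) / Sh := step
        _ = attackDist uh x t := rfl
    rw [abs_sub_le_iff]
    constructor
    · nlinarith [hDpos t]
    · nlinarith [hDpos t, mul_nonneg (by linarith : (0:ℝ) ≤ Real.exp (2 * ε) - 1 - (1 - Real.exp (-(2 * ε)))) (hDpos t).le]
  have hsum1 : ∑ t, attackDist u x t = 1 := by
    simp only [attackDist, ← Finset.sum_div, ← hSdef]
    exact div_self (ne_of_gt hS)
  have hmain : |defenderUtil uh v x - defenderUtil u v x| ≤ c := by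
    have hdiff : defenderUtil uh v x - defenderUtil u v x
        = ∑ t, (attackDist uh x t - attackDist u x t) * v t (x t) := by
      rw [defenderUtil, defenderUtil, ← Finset.sum_sub_distrib]
      congr 1; ext t; ring
    rw [hdiff]
    calc |∑ t, (attackDist uh x t - attackDist u x t) * v t (x t)|
        ≤ ∑ t, |(attackDist uh x t - attackDist u x t) * v t (x t)| :=
          Finset.abs_sum_le_sum_abs _ _
      _ ≤ ∑ t, c * attackDist u x t := by
          apply Finset.sum_le_sum
          intro t _
          rw [abs_mul]
          have hv1 : |v t (x t)| ≤ 1 := by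
            have := hv t _ (hx t)
            rw [abs_le]; exact ⟨this.1, this.2⟩
          calc |attackDist uh x t - attackDist u x t| * |v t (x t)|
              ≤ (c * attackDist u x t) * 1 :=
                mul_le_mul (hdist t) hv1 (abs_nonneg _)
                  (mul_nonneg hcnn (hDpos t).le)
            _ = c * attackDist u x t := by ring
      _ = c * ∑ t, attackDist u x t := by rw [Finset.mul_sum]
      _ = c := by rw [hsum1, mul_one]
  linarith
end

section
/- Let T be a finite nonempty set of targets, u_t, û_t : [0,1] → ℝ attacker utility functions and v_t : [0,1] → [−1,1] defender utility functions for t ∈ T. Define D^x(t) = exp(u_t(x_t)) / Σ_{i∈T} exp(u_i(x_i)), D̄^x(t) = exp(û_t(x_t)) / Σ_{i∈T} exp(û_i(x_i)), V(x) = Σ_{t∈T} D^x(t)·v_t(x_t) and V̄(x) = Σ_{t∈T} D̄^x(t)·v_t(x_t). Suppose there is ε with 0 ≤ ε ≤ 1/4 such that |û_t(p) − u_t(p)| ≤ ε for all t ∈ T and p ∈ [0,1]. If x' ∈ [0,1]^T satisfies V̄(y) ≤ V̄(x') for all y ∈ [0,1]^T (i.e., x' maximizes the predicted defender utility), then V(y)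 − V(x') ≤ 8ε for every y ∈ [0,1]^T; that is, the strategy optimizing the predicted utility is 8ε-optimal for the true defender utility. -/
open Real Set

/-!
Perturbing every logit by at most `ε` changes each numerator `exp (u t (x t))` and
the normalizing sum by a factor in `[exp (-ε), exp ε]`, so each attack probability changes by a
factor in `[exp (-2ε), exp (2ε)]`. Since `|v| ≤ 1`, the predicted and true defender utilities
differ by at most `exp (2ε) - 1 ≤ 4ε` at every strategy, and a maximizer of one is then
`2 · 4ε`-optimal for the other.
-/

lemma exp_two_mul_le_one_add_four_mul {ε : ℝ} (hε0 : 0 ≤ ε) (hε : ε ≤ 1 / 4) :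
    exp (2 * ε) ≤ 1 + 4 * ε := by
  have hlt : 2 * ε < 1 := by linarith
  calc exp (2 * ε) ≤ 1 / (1 - 2 * ε) := exp_bound_div_one_sub_of_interval (by linarith) hlt
    _ ≤ 1 + 4 * ε := by
      -- `(1 + 4ε)(1 - 2ε) = 1 + 2ε(1 - 4ε)`: this is where `ε ≤ 1/4` enters.
      rw [div_le_iff₀ (by linarith)]
      nlinarith

lemma abs_sub_le_of_le_mul_of_le_mul {p q c : ℝ} (hc : 1 ≤ c)
    (hqp : q ≤ c * p) (hpq : p ≤ c * q) : |q - p| ≤ (c - 1) * p := by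
  rw [abs_le]
  constructor <;> nlinarith

section QuantalResponse

variable {T : Type*} [Fintype T]

lemma attackDist_nonneg (u : T → ℝ → ℝ) (x : T → ℝ) (t : T) : 0 ≤ attackDist u x t :=
  div_nonneg (exp_pos _).le (Finset.sum_nonneg fun _ _ => (exp_pos _).le)

lemma sum_attackDist_le_one (u : T → ℝ → ℝ) (x : T → ℝ) : ∑ t, attackDist u x t ≤ 1 := by
  simp only [attackDist, ← Finset.sum_div]
  exact div_self_le_one _

lemma attackDist_le_exp_two_mul_mul {u uh : T → ℝ → ℝ} {x : T → ℝ} {ε : ℝ}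
    (hu : ∀ i, |uh i (x i) - u i (x i)| ≤ ε) (t : T) :
    attackDist uh x t ≤ exp (2 * ε) * attackDist u x t := by
  have hsum_pos : ∀ w : T → ℝ → ℝ, 0 < ∑ i, exp (w i (x i)) := fun w =>
    (exp_pos _).trans_le
      (Finset.single_le_sum (fun _ _ => (exp_pos _).le) (Finset.mem_univ t))
  have hnum : exp (uh t (x t)) ≤ exp ε * exp (u t (x t)) := by
    rw [← exp_add, exp_le_exp]
    linarith [(abs_le.1 (hu t)).2]
  have hden : exp (-ε) * ∑ i, exp (u i (x i)) ≤ ∑ i, exp (uh i (x i)) := by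
    rw [Finset.mul_sum]
    refine Finset.sum_le_sum fun i _ => ?_
    rw [← exp_add, exp_le_exp]
    linarith [(abs_le.1 (hu i)).1]
  have hS := hsum_pos u
  unfold attackDist
  rw [div_le_iff₀ (hsum_pos uh)]
  calc exp (uh t (x t)) ≤ exp ε * exp (u t (x t)) := hnum
    _ = exp (2 * ε) * (exp (u t (x t)) / ∑ i, exp (u i (x i)))
          * (exp (-ε) * ∑ i, exp (u i (x i))) := by
      rw [show 2 * ε = ε + ε by ring, exp_add, exp_neg]
      field_simp
    _ ≤ exp (2 * ε) * (exp (u t (x t)) / ∑ i, exp (u i (x i))) * ∑ i, exp (uh i (x i)) := by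
      gcongr

lemma abs_attackDist_sub_le {u uh : T → ℝ → ℝ} {x : T → ℝ} {ε : ℝ}
    (hu : ∀ i, |uh i (x i) - u i (x i)| ≤ ε) (t : T) :
    |attackDist uh x t - attackDist u x t| ≤ (exp (2 * ε) - 1) * attackDist u x t := by
  have hε : 0 ≤ ε := (abs_nonneg _).trans (hu t)
  refine abs_sub_le_of_le_mul_of_le_mul (one_le_exp (by positivity))
    (attackDist_le_exp_two_mul_mul hu t)
    (attackDist_le_exp_two_mul_mul (fun i => ?_) t)
  rw [abs_sub_comm]
  exact hu i

lemma abs_defenderUtil_sub_le {u uh v : T → ℝ → ℝ} {x : T → ℝ} {ε : ℝ} (hε : 0 ≤ ε)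
    (hv : ∀ t, |v t (x t)| ≤ 1) (hu : ∀ i, |uh i (x i) - u i (x i)| ≤ ε) :
    |defenderUtil uh v x - defenderUtil u v x| ≤ exp (2 * ε) - 1 := by
  have hE : 0 ≤ exp (2 * ε) - 1 := by linarith [one_le_exp (by positivity : 0 ≤ 2 * ε)]
  unfold defenderUtil
  rw [← Finset.sum_sub_distrib]
  calc |∑ t, (attackDist uh x t * v t (x t) - attackDist u x t * v t (x t))|
      ≤ ∑ t, |attackDist uh x t - attackDist u x t| * |v t (x t)| := by
        simp only [← sub_mul, ← abs_mul]
        exact Finset.abs_sum_le_sum_abs _ _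
    _ ≤ ∑ t, (exp (2 * ε) - 1) * attackDist u x t := by
        refine Finset.sum_le_sum fun t _ => ?_
        calc |attackDist uh x t - attackDist u x t| * |v t (x t)|
            ≤ (exp (2 * ε) - 1) * attackDist u x t * 1 :=
              mul_le_mul (abs_attackDist_sub_le hu t) (hv t) (abs_nonneg _)
                (mul_nonneg hE (attackDist_nonneg u x t))
          _ = (exp (2 * ε) - 1) * attackDist u x t := mul_one _
    _ ≤ exp (2 * ε) - 1 := by
        rw [← Finset.mul_sum]
        exact mul_le_of_le_one_right hE (sum_attackDist_le_one u x)

end QuantalResponse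

theorem predicted_optimal_strategy_near_optimal_general {T : Type*} [Fintype T]
    (u uh : T → ℝ → ℝ) (v : T → ℝ → ℝ)
    (hv : ∀ t, ∀ p ∈ Set.Icc (0:ℝ) 1, v t p ∈ Set.Icc (-1:ℝ) 1)
    (ε : ℝ) (hε0 : 0 ≤ ε) (hε : ε ≤ 1/4)
    (hu : ∀ t, ∀ p ∈ Set.Icc (0:ℝ) 1, |uh t p - u t p| ≤ ε)
    (x' : T → ℝ) (hx' : ∀ t, x' t ∈ Set.Icc (0:ℝ) 1)
    (hopt : ∀ y : T → ℝ, (∀ t, y t ∈ Set.Icc (0:ℝ) 1) →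
      defenderUtil uh v y ≤ defenderUtil uh v x') :
    ∀ y : T → ℝ, (∀ t, y t ∈ Set.Icc (0:ℝ) 1) →
      defenderUtil u v y - defenderUtil u v x' ≤ 8 * ε := by
  have hclose : ∀ y : T → ℝ, (∀ t, y t ∈ Set.Icc (0:ℝ) 1) →
      |defenderUtil uh v y - defenderUtil u v y| ≤ 4 * ε := fun y hy =>
    (abs_defenderUtil_sub_le hε0 (fun t => abs_le.2 (hv t _ (hy t)))
      (fun t => hu t _ (hy t))).trans (by linarith [exp_two_mul_le_one_add_four_mul hε0 hε])
  intro y hy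
  have hy_close := abs_le.1 (hclose y hy)
  have hx'_close := abs_le.1 (hclose x' hx')
  linarith [hopt y hy]

/-- If the learned attacker utilities `uh` are uniformly within `ε ≤ 1/4` of the true
utilities `u` on `[0,1]`, then any strategy `x'` maximizing the predicted defender
utility is `8ε`-optimal for the true defender utility. -/
theorem predicted_optimal_strategy_near_optimal {T : Type*} [Fintype T] [Nonempty T]
    (u uh : T → ℝ → ℝ) (v : T → ℝ → ℝ)
    (hv : ∀ t, ∀ p ∈ Set.Icc (0:ℝ) 1, v t p ∈ Set.Icc (-1:ℝ) 1)
    (ε : ℝ) (hε0 : 0 ≤ ε) (hε : ε ≤ 1/4)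
    (hu : ∀ t, ∀ p ∈ Set.Icc (0:ℝ) 1, |uh t p - u t p| ≤ ε)
    (x' : T → ℝ) (hx' : ∀ t, x' t ∈ Set.Icc (0:ℝ) 1)
    (hopt : ∀ y : T → ℝ, (∀ t, y t ∈ Set.Icc (0:ℝ) 1) →
      defenderUtil uh v y ≤ defenderUtil uh v x') :
    ∀ y : T → ℝ, (∀ t, y t ∈ Set.Icc (0:ℝ) 1) →
      defenderUtil u v y - defenderUtil u v x' ≤ 8 * ε :=
  predicted_optimal_strategy_near_optimal_general u uh v hv ε hε0 hε hu x' hx' hopt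
end

section
/- Let L > 0, ε > 0, and let f : [0,1] → ℝ be L-Lipschitz, i.e., |f(x) − f(y)| ≤ L·|x − y| for all x, y ∈ [0,1]. Then there exists a real polynomial q of degree at most ⌈12L/ε⌉ such that |f(x) − q(x)| ≤ ε/2 for all x ∈ [0,1]. -/
/-!
Jackson's kernel argument. The substitution `x = (1 + cos θ) / 2` turns `f` into an even,
`2π`-periodic, `L/2`-Lipschitz function `g`, and convolving `g` with an even trigonometric
polynomial of degree `m` yields, via Chebyshev polynomials, a polynomial of degree `m` in `cos θ`.
Convolve with `F² / ∫ F²`, where `F = |∑_{j ≤ n} e^{ijt}|²` is the Fejér kernel, of degree `n`.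
By orthogonality `∫ F² ≥ 4π(n+1)³/3`, and since `F ≤ min ((n+1)², π²/t²)` the first moment
satisfies `∫ |t| F² ≤ 2π²(n+1)²`, so the error is at most `(L/2) · 3π/(2(n+1))`. For
`2n ≤ ⌈12L/ε⌉` this is at most `ε/2`, because `π ≤ 4`.
-/

open Real Finset Polynomial Function
open scoped NNReal

lemma cos_mul_cos (x y : ℝ) : cos x * cos y = (cos (x + y) + cos (x - y)) / 2 := by
  rw [cos_add, cos_sub]; ring

lemma Function.Odd.intervalIntegral_neg_eq_zero {f : ℝ → ℝ} (hf : f.Odd) (a : ℝ) :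
    ∫ x in -a..a, f x = 0 := by
  have h := intervalIntegral.integral_comp_neg (a := -a) (b := a) f
  simp only [hf _, intervalIntegral.integral_neg, neg_neg] at h
  linarith

lemma Function.Even.intervalIntegral_neg_eq_two_mul {f : ℝ → ℝ} (hf : f.Even) (hc : Continuous f)
    (a : ℝ) : ∫ x in -a..a, f x = 2 * ∫ x in 0..a, f x := by
  have h := intervalIntegral.integral_comp_neg (a := 0) (b := a) f
  simp only [hf _, neg_zero] at h
  rw [← intervalIntegral.integral_add_adjacent_intervals (b := 0) (hc.intervalIntegrable _ _)
    (hc.intervalIntegrable _ _), ← h]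
  ring

lemma integral_cos_int_mul (k : ℤ) :
    ∫ t in -π..π, cos (k * t) = if k = 0 then 2 * π else 0 := by
  split_ifs with hk
  · simp [hk, two_mul]
  · rw [intervalIntegral.integral_comp_mul_left (fun x => cos x) (Int.cast_ne_zero.mpr hk),
      integral_cos, mul_neg, sin_neg, sin_int_mul_pi]
    simp

lemma integral_cos_int_mul_mul_cos_int_mul (a b : ℤ) :
    ∫ t in -π..π, cos (a * t) * cos (b * t) =
      π * ((if a = b then 1 else 0) + if a = -b then 1 else 0) := by
  have product_to_sum : ∀ t : ℝ,
      cos (a * t) * cos (b * t) = (cos ((a + b : ℤ) * t) + cos ((a - b : ℤ) * t)) / 2 := fun t => by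
    rw [cos_mul_cos]; push_cast; ring_nf
  simp_rw [product_to_sum]
  rw [intervalIntegral.integral_div, intervalIntegral.integral_add
    (by apply Continuous.intervalIntegrable; fun_prop)
    (by apply Continuous.intervalIntegrable; fun_prop),
    integral_cos_int_mul, integral_cos_int_mul]
  simp only [add_eq_zero_iff_eq_neg, sub_eq_zero]
  split_ifs <;> ring

def cosSpan (m : ℕ) : Submodule ℝ (ℝ → ℝ) :=
  Submodule.span ℝ ((fun k : ℤ => fun t : ℝ => cos (k * t)) '' {k | k.natAbs ≤ m})

lemma cos_int_mul_mem_cosSpan {m : ℕ} {k : ℤ} (hk : k.natAbs ≤ m) :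
    (fun t => cos (k * t)) ∈ cosSpan m :=
  Submodule.subset_span ⟨k, hk, rfl⟩

lemma continuous_of_mem_cosSpan {m : ℕ} {K : ℝ → ℝ} (hK : K ∈ cosSpan m) : Continuous K := by
  induction hK using Submodule.span_induction with
  | mem K hK => obtain ⟨k, -, rfl⟩ := hK; fun_prop
  | zero => exact continuous_const
  | add _ _ _ _ h₁ h₂ => exact h₁.add h₂
  | smul c _ _ h => exact h.const_smul c

lemma mul_mem_cosSpan {a b : ℕ} {K₁ K₂ : ℝ → ℝ} (h₁ : K₁ ∈ cosSpan a) (h₂ : K₂ ∈ cosSpan b) :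
    K₁ * K₂ ∈ cosSpan (a + b) := by
  suffices cosSpan a * cosSpan b ≤ cosSpan (a + b) from this (Submodule.mul_mem_mul h₁ h₂)
  rw [cosSpan, cosSpan, Submodule.span_mul_span, Submodule.span_le]
  rintro _ ⟨_, ⟨j, hj, rfl⟩, _, ⟨k, hk, rfl⟩, rfl⟩
  have product_to_sum : (fun t => cos (j * t)) * (fun t => cos (k * t)) =
      (2⁻¹ : ℝ) • (fun t => cos ((j + k : ℤ) * t)) +
        (2⁻¹ : ℝ) • fun t => cos ((j - k : ℤ) * t) := by
    ext t
    simp only [Pi.mul_apply, Pi.add_apply, Pi.smul_apply, smul_eq_mul, Int.cast_add, Int.cast_sub,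
      add_mul, sub_mul, cos_mul_cos]
    ring
  simp only [Set.mem_ofPred_eq] at hj hk
  simp only [SetLike.mem_coe]
  rw [product_to_sum]
  exact add_mem (Submodule.smul_mem _ _ (cos_int_mul_mem_cosSpan (by omega)))
    (Submodule.smul_mem _ _ (cos_int_mul_mem_cosSpan (by omega)))

lemma integral_comp_add_mul_cos {g : ℝ → ℝ} (hg : Continuous g) (hper : Periodic g (2 * π))
    (heven : g.Even) (k : ℤ) (θ : ℝ) :
    ∫ t in -π..π, g (θ + t) * cos (k * t) = (∫ s in -π..π, g s * cos (k * s)) * cos (k * θ) := by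
  have hper' : Periodic (fun s => g s * cos (k * (s - θ))) (2 * π) := fun s => by
    simp only [hper s, show (k : ℝ) * (s + 2 * π - θ) = k * (s - θ) + k * (2 * π) by ring,
      cos_add_int_mul_two_pi]
  have hodd : (fun s => g s * sin (k * s)).Odd := fun s => by
    simp only [heven s, mul_neg, sin_neg]
  calc ∫ t in -π..π, g (θ + t) * cos (k * t)
      = ∫ s in -π + θ..-π + θ + 2 * π, g s * cos (k * (s - θ)) := by
        rw [show -π + θ + 2 * π = π + θ by ring, ← intervalIntegral.integral_comp_add_right]
        simp only [add_comm _ θ, add_sub_cancel_left]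
    _ = ∫ s in -π..π, g s * cos (k * (s - θ)) := by
        rw [hper'.intervalIntegral_add_eq (-π + θ) (-π), show -π + 2 * π = π by ring]
    _ = ∫ s in -π..π, (cos (k * θ) * (g s * cos (k * s)) + sin (k * θ) * (g s * sin (k * s))) := by
        congr 1; ext s; rw [mul_sub, cos_sub]; ring
    _ = (∫ s in -π..π, g s * cos (k * s)) * cos (k * θ) := by
        rw [intervalIntegral.integral_add (by apply Continuous.intervalIntegrable; fun_prop)
          (by apply Continuous.intervalIntegrable; fun_prop), intervalIntegral.integral_const_mul,
          intervalIntegral.integral_const_mul, hodd.intervalIntegral_neg_eq_zero]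
        ring

lemma exists_integral_comp_add_mul_eq_eval_cos {g : ℝ → ℝ} (hg : Continuous g)
    (hper : Periodic g (2 * π)) (heven : g.Even) {m : ℕ} {K : ℝ → ℝ} (hK : K ∈ cosSpan m) :
    ∃ p : ℝ[X], p.natDegree ≤ m ∧ ∀ θ, ∫ t in -π..π, g (θ + t) * K t = p.eval (cos θ) := by
  induction hK using Submodule.span_induction with
  | mem K hK =>
    obtain ⟨k, hk, rfl⟩ := hK
    refine ⟨C (∫ s in -π..π, g s * cos (k * s)) * Chebyshev.T ℝ k, ?_, fun θ => ?_⟩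
    · exact (natDegree_C_mul_le _ _).trans ((Chebyshev.natDegree_T ℝ k).trans_le hk)
    · rw [eval_mul, eval_C, Chebyshev.T_real_cos, integral_comp_add_mul_cos hg hper heven]
  | zero => exact ⟨0, by simp, fun θ => by simp⟩
  | add K₁ K₂ h₁ h₂ ih₁ ih₂ =>
    obtain ⟨p₁, hp₁, e₁⟩ := ih₁
    obtain ⟨p₂, hp₂, e₂⟩ := ih₂
    refine ⟨p₁ + p₂, natDegree_add_le_of_degree_le hp₁ hp₂, fun θ => ?_⟩
    have hi : ∀ K ∈ cosSpan m,
        IntervalIntegrable (fun t => g (θ + t) * K t) MeasureTheory.volume (-π) π := fun K hK => by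
      have := continuous_of_mem_cosSpan hK
      apply Continuous.intervalIntegrable; fun_prop
    simp only [Pi.add_apply, mul_add, intervalIntegral.integral_add (hi _ h₁) (hi _ h₂), e₁, e₂,
      eval_add]
  | smul c K _ ih =>
    obtain ⟨p, hp, e⟩ := ih
    refine ⟨c • p, (natDegree_smul_le _ _).trans hp, fun θ => ?_⟩
    simp only [Pi.smul_apply, smul_eq_mul, mul_left_comm _ c, intervalIntegral.integral_const_mul,
      e, eval_smul]

lemma abs_sub_integral_comp_add_mul_le {g K : ℝ → ℝ} {M : ℝ≥0} (hg : LipschitzWith M g)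
    (hK : Continuous K) (hK₀ : ∀ t, 0 ≤ K t) {a b : ℝ} (hab : a ≤ b)
    (hK₁ : ∫ t in a..b, K t = 1) (θ : ℝ) :
    |g θ - ∫ t in a..b, g (θ + t) * K t| ≤ M * ∫ t in a..b, |t| * K t := by
  have hgc := hg.continuous
  calc |g θ - ∫ t in a..b, g (θ + t) * K t|
      = |∫ t in a..b, (g θ - g (θ + t)) * K t| := by
        simp_rw [sub_mul]
        rw [intervalIntegral.integral_sub (by apply Continuous.intervalIntegrable; fun_prop)
          (by apply Continuous.intervalIntegrable; fun_prop), intervalIntegral.integral_const_mul,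
          hK₁, mul_one]
    _ ≤ ∫ t in a..b, |(g θ - g (θ + t)) * K t| :=
        intervalIntegral.abs_integral_le_integral_abs hab
    _ ≤ ∫ t in a..b, M * (|t| * K t) := by
        refine intervalIntegral.integral_mono_on hab
          (by apply Continuous.intervalIntegrable; fun_prop)
          (by apply Continuous.intervalIntegrable; fun_prop) fun t _ => ?_
        have := hg.dist_le_mul θ (θ + t)
        rw [Real.dist_eq, Real.dist_eq, sub_add_cancel_left, abs_neg] at this
        rw [abs_mul, abs_of_nonneg (hK₀ t), ← mul_assoc]
        exact mul_le_mul_of_nonneg_right this (hK₀ t)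
    _ = M * ∫ t in a..b, |t| * K t := intervalIntegral.integral_const_mul _ _

/-- `n` times the classical Fejér kernel. -/
noncomputable def fejerKernel (n : ℕ) (t : ℝ) : ℝ :=
  ∑ j ∈ range n, ∑ l ∈ range n, cos ((j - l : ℝ) * t)

lemma fejerKernel_eq_norm_sq (n : ℕ) (t : ℝ) :
    fejerKernel n t = ‖∑ j ∈ range n, Complex.exp (Complex.I * t) ^ j‖ ^ 2 := by
  rw [← Complex.normSq_eq_norm_sq, ← Complex.ofReal_re (Complex.normSq _), ← Complex.mul_conj,
    map_sum, sum_mul_sum, Complex.re_sum, fejerKernel]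
  refine sum_congr rfl fun j _ => ?_
  rw [Complex.re_sum]
  refine sum_congr rfl fun l _ => ?_
  rw [map_pow, ← Complex.exp_conj, ← Complex.exp_nat_mul, ← Complex.exp_nat_mul,
    ← Complex.exp_add, ← Complex.exp_ofReal_mul_I_re]
  congr 2
  simp only [map_mul, Complex.conj_I, Complex.conj_ofReal]
  push_cast
  ring

lemma fejerKernel_eq_sum_product (n : ℕ) (t : ℝ) :
    fejerKernel n t = ∑ q ∈ range n ×ˢ range n, cos (((q.1 : ℤ) - q.2 : ℤ) * t) := by
  rw [fejerKernel, sum_product]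
  push_cast
  rfl

lemma fejerKernel_nonneg (n : ℕ) (t : ℝ) : 0 ≤ fejerKernel n t := by
  rw [fejerKernel_eq_norm_sq]; positivity

lemma fejerKernel_le_sq (n : ℕ) (t : ℝ) : fejerKernel n t ≤ n ^ 2 := by
  rw [fejerKernel_eq_norm_sq]
  gcongr
  refine (norm_sum_le _ _).trans ?_
  simp [Complex.norm_exp_I_mul_ofReal]

lemma fejerKernel_le_pi_sq_div_sq (n : ℕ) {t : ℝ} (ht₀ : 0 < t) (htπ : t ≤ π) :
    fejerKernel n t ≤ π ^ 2 / t ^ 2 := by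
  set z := Complex.exp (Complex.I * t)
  have hz : ‖z‖ = 1 := Complex.norm_exp_I_mul_ofReal t
  have hsin : t / π ≤ sin (t / 2) := by
    have := mul_le_sin (x := t / 2) (by linarith) (by linarith)
    rwa [show 2 / π * (t / 2) = t / π by ring] at this
  have hz₁ : 2 * (t / π) ≤ ‖z - 1‖ := by
    rw [Complex.norm_exp_I_mul_ofReal_sub_one, norm_mul, Real.norm_two,
      Real.norm_of_nonneg (by linarith [div_pos ht₀ pi_pos])]
    linarith
  have hz₁' : z ≠ 1 := fun h => by
    rw [h, sub_self, norm_zero] at hz₁; linarith [div_pos ht₀ pi_pos]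
  rw [fejerKernel_eq_norm_sq, geom_sum_eq hz₁', ← div_pow, norm_div]
  refine pow_le_pow_left₀ (by positivity) ?_ 2
  calc ‖z ^ n - 1‖ / ‖z - 1‖ ≤ 2 / (2 * (t / π)) := by
        gcongr
        exact (norm_sub_le _ _).trans (by simp only [norm_pow, hz, one_pow, norm_one]; norm_num)
    _ = π / t := by field_simp

lemma fejerKernel_neg (n : ℕ) (t : ℝ) : fejerKernel n (-t) = fejerKernel n t := by
  simp only [fejerKernel, mul_neg, cos_neg]

lemma continuous_fejerKernel (n : ℕ) : Continuous (fejerKernel n) := by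
  unfold fejerKernel; fun_prop

lemma fejerKernel_mem_cosSpan (n : ℕ) : fejerKernel (n + 1) ∈ cosSpan n := by
  have : fejerKernel (n + 1) =
      ∑ q ∈ range (n + 1) ×ˢ range (n + 1), fun t => cos (((q.1 : ℤ) - q.2 : ℤ) * t) := by
    ext t; rw [fejerKernel_eq_sum_product, Finset.sum_apply]
  rw [this]
  exact Submodule.sum_mem _ fun q hq => cos_int_mul_mem_cosSpan (by
    simp only [mem_product, mem_range] at hq; omega)

lemma sub_abs_le_card_sub_eq (n : ℕ) (d : ℤ) :
    (n : ℝ) - |(d : ℝ)| ≤ #{q ∈ range n ×ˢ range n | (q.1 : ℤ) - q.2 = d} := by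
  have hn : (n : ℝ) - d.natAbs ≤ (n - d.natAbs : ℕ) := by
    rw [sub_le_iff_le_add]; exact_mod_cast (by omega : n ≤ n - d.natAbs + d.natAbs)
  rw [← Int.cast_abs, Int.abs_eq_natAbs, Int.cast_natCast]
  refine hn.trans (Nat.cast_le.mpr ?_)
  obtain ⟨k, rfl | rfl⟩ := Int.eq_nat_or_neg d
  · calc n - (k : ℤ).natAbs = #((range (n - k)).image fun i => (i + k, i)) := by
          rw [card_image_of_injective _ fun i j h => (Prod.ext_iff.mp h).2]; simp
      _ ≤ _ := card_le_card fun q hq => by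
          obtain ⟨i, hi, rfl⟩ := mem_image.mp hq
          simp only [mem_range, mem_filter, mem_product] at hi ⊢
          omega
  · calc n - (-(k : ℤ)).natAbs = #((range (n - k)).image fun i => (i, i + k)) := by
          rw [card_image_of_injective _ fun i j h => (Prod.ext_iff.mp h).1]; simp
      _ ≤ _ := card_le_card fun q hq => by
          obtain ⟨i, hi, rfl⟩ := mem_image.mp hq
          simp only [mem_range, mem_filter, mem_product] at hi ⊢
          omega

lemma sum_range_natCast_id (n : ℕ) : ∑ j ∈ range n, (j : ℝ) = n * (n - 1) / 2 := by
  induction n with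
  | zero => simp
  | succ n ih => rw [sum_range_succ, ih]; push_cast; ring

lemma sum_sum_abs_sub (n : ℕ) :
    ∑ j ∈ range n, ∑ l ∈ range n, |(j : ℝ) - l| = (n ^ 3 - n) / 3 := by
  induction n with
  | zero => simp
  | succ n ih =>
    have row : ∑ j ∈ range n, |(j : ℝ) - n| = n * (n + 1) / 2 := by
      rw [sum_congr rfl fun j hj => abs_sub_comm (j : ℝ) n ▸ abs_of_nonneg (sub_nonneg.mpr
        (Nat.cast_le.mpr (mem_range.mp hj).le)), sum_sub_distrib, sum_const, card_range,
        nsmul_eq_mul, sum_range_natCast_id]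
      ring
    simp only [sum_range_succ, sum_add_distrib, ih, row, abs_sub_comm (n : ℝ), sub_self, abs_zero]
    push_cast
    ring

lemma integral_fejerKernel_sq_ge (n : ℕ) :
    4 * π / 3 * n ^ 3 ≤ ∫ t in -π..π, fejerKernel n t ^ 2 := by
  set P := range n ×ˢ range n
  set d : ℕ × ℕ → ℤ := fun q => q.1 - q.2
  have expand : ∫ t in -π..π, fejerKernel n t ^ 2 =
      ∑ p ∈ P, ∑ q ∈ P, π * ((if d p = d q then 1 else 0) + if d p = -d q then 1 else 0) := by
    simp_rw [fejerKernel_eq_sum_product, sq, sum_mul_sum]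
    rw [intervalIntegral.integral_finsetSum fun p _ => by
      apply Continuous.intervalIntegrable; fun_prop]
    refine sum_congr rfl fun p _ => ?_
    rw [intervalIntegral.integral_finsetSum fun q _ => by
      apply Continuous.intervalIntegrable; fun_prop]
    exact sum_congr rfl fun q _ => integral_cos_int_mul_mul_cos_int_mul _ _
  have count : ∀ p ∈ P, 2 * π * (n - |(d p : ℝ)|) ≤
      ∑ q ∈ P, π * ((if d p = d q then 1 else 0) + if d p = -d q then 1 else 0) := fun p _ => by
    have h₁ : (n : ℝ) - |(d p : ℝ)| ≤ #{q ∈ P | d q = d p} := sub_abs_le_card_sub_eq n (d p)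
    have h₂ : (n : ℝ) - |(d p : ℝ)| ≤ #{q ∈ P | d q = -d p} := by
      simpa using sub_abs_le_card_sub_eq n (-d p)
    simp only [← mul_sum, sum_add_distrib, sum_boole, eq_comm (a := d p), neg_eq_iff_eq_neg]
    nlinarith [pi_pos]
  have total : ∑ p ∈ P, ((n : ℝ) - |(d p : ℝ)|) = n ^ 3 - (n ^ 3 - n) / 3 := by
    rw [sum_sub_distrib, sum_const, card_product, card_range, ← sum_sum_abs_sub, sum_product]
    push_cast [d]
    ring
  calc 4 * π / 3 * n ^ 3 ≤ 2 * π * ∑ p ∈ P, ((n : ℝ) - |(d p : ℝ)|) := by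
        rw [total]; nlinarith [pi_pos, (Nat.cast_nonneg n : (0 : ℝ) ≤ n)]
    _ ≤ _ := by rw [mul_sum, expand]; exact sum_le_sum count

lemma integral_abs_mul_fejerKernel_sq_le {n : ℕ} (hn : 0 < n) :
    ∫ t in -π..π, |t| * fejerKernel n t ^ 2 ≤ 2 * π ^ 2 * n ^ 2 := by
  have hn' : (1 : ℝ) ≤ n := by exact_mod_cast hn
  have ha₀ : 0 < π / n := by positivity
  have haπ : π / n ≤ π := div_le_self pi_pos.le hn'
  have hF := continuous_fejerKernel n
  have hc : Continuous fun t => t * fejerKernel n t ^ 2 := by fun_prop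
  have near : ∫ t in 0..π / n, t * fejerKernel n t ^ 2 ≤ π ^ 2 * n ^ 2 / 2 := by
    calc ∫ t in 0..π / n, t * fejerKernel n t ^ 2 ≤ ∫ t in 0..π / n, (n : ℝ) ^ 4 * t := by
          refine intervalIntegral.integral_mono_on ha₀.le (hc.intervalIntegrable _ _)
            (by apply Continuous.intervalIntegrable; fun_prop) fun t ht => ?_
          have := pow_le_pow_left₀ (fejerKernel_nonneg n t) (fejerKernel_le_sq n t) 2
          nlinarith [ht.1]
      _ = π ^ 2 * n ^ 2 / 2 := by
          rw [intervalIntegral.integral_const_mul, integral_id]; field_simp; ring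
  have h0 : (0 : ℝ) ∉ Set.uIcc (π / n) π := by
    rw [Set.uIcc_of_le haπ]; exact fun h => ha₀.not_ge h.1
  have far : ∫ t in π / n..π, t * fejerKernel n t ^ 2 ≤ π ^ 2 * n ^ 2 / 2 := by
    calc ∫ t in π / n..π, t * fejerKernel n t ^ 2 ≤ ∫ t in π / n..π, π ^ 4 * t ^ (-3 : ℤ) := by
          refine intervalIntegral.integral_mono_on haπ (hc.intervalIntegrable _ _)
            ((intervalIntegral.intervalIntegrable_zpow (Or.inr h0)).const_mul _) fun t ht => ?_
          have ht₀ : 0 < t := ha₀.trans_le ht.1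
          have := pow_le_pow_left₀ (fejerKernel_nonneg n t)
            (fejerKernel_le_pi_sq_div_sq n ht₀ ht.2) 2
          calc t * fejerKernel n t ^ 2 ≤ t * (π ^ 2 / t ^ 2) ^ 2 := by gcongr
            _ = π ^ 4 * t ^ (-3 : ℤ) := by field_simp
      _ ≤ π ^ 2 * n ^ 2 / 2 := by
          rw [intervalIntegral.integral_const_mul, integral_zpow (Or.inr ⟨by norm_num, h0⟩)]
          norm_num [zpow_neg]
          field_simp
          nlinarith [pi_pos]
  have heven : (fun t => |t| * fejerKernel n t ^ 2).Even := fun t => by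
    simp only [abs_neg, fejerKernel_neg]
  calc ∫ t in -π..π, |t| * fejerKernel n t ^ 2
      = 2 * ∫ t in 0..π, |t| * fejerKernel n t ^ 2 :=
        heven.intervalIntegral_neg_eq_two_mul (by fun_prop) π
    _ = 2 * ((∫ t in 0..π / n, t * fejerKernel n t ^ 2) +
          ∫ t in π / n..π, t * fejerKernel n t ^ 2) := by
        rw [intervalIntegral.integral_add_adjacent_intervals (hc.intervalIntegrable _ _)
          (hc.intervalIntegrable _ _)]
        congr 1
        refine intervalIntegral.integral_congr fun t ht => ?_
        rw [Set.uIcc_of_le pi_pos.le] at ht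
        simp only [abs_of_nonneg ht.1]
    _ ≤ 2 * π ^ 2 * n ^ 2 := by linarith

theorem exists_polynomial_abs_sub_eval_cos_le {g : ℝ → ℝ} {M : ℝ≥0} (hg : LipschitzWith M g)
    (hper : Periodic g (2 * π)) (heven : g.Even) (n : ℕ) :
    ∃ p : ℝ[X], p.natDegree ≤ 2 * n ∧
      ∀ θ, |g θ - p.eval (cos θ)| ≤ 3 * π * M / (2 * (n + 1)) := by
  set F := fejerKernel (n + 1)
  set I := ∫ t in -π..π, F t ^ 2
  have hI : 4 * π / 3 * (n + 1) ^ 3 ≤ I := by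
    simpa using integral_fejerKernel_sq_ge (n + 1)
  have hI₀ : 0 < I := lt_of_lt_of_le (by positivity) hI
  set K := fun t => I⁻¹ * F t ^ 2
  have hK : K ∈ cosSpan (2 * n) := by
    have hF : F ∈ cosSpan n := fejerKernel_mem_cosSpan n
    rw [show K = I⁻¹ • (F * F) by ext t; simp [K, sq]]
    exact Submodule.smul_mem _ _ (two_mul n ▸ mul_mem_cosSpan hF hF)
  have hK₁ : ∫ t in -π..π, K t = 1 := by
    rw [intervalIntegral.integral_const_mul, inv_mul_cancel₀ hI₀.ne']
  have hmoment : ∫ t in -π..π, |t| * K t ≤ 3 * π / (2 * (n + 1)) := by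
    simp only [K, mul_left_comm |_| I⁻¹, intervalIntegral.integral_const_mul]
    rw [inv_mul_le_iff₀ hI₀]
    calc ∫ t in -π..π, |t| * F t ^ 2 ≤ 2 * π ^ 2 * (n + 1) ^ 2 := by
          simpa using integral_abs_mul_fejerKernel_sq_le n.succ_pos
      _ = 4 * π / 3 * (n + 1) ^ 3 * (3 * π / (2 * (n + 1))) := by field_simp; ring
      _ ≤ I * (3 * π / (2 * (n + 1))) := by gcongr
  obtain ⟨p, hp, hpK⟩ := exists_integral_comp_add_mul_eq_eval_cos hg.continuous hper heven hK
  refine ⟨p, hp, fun θ => ?_⟩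
  rw [← hpK]
  calc |g θ - ∫ t in -π..π, g (θ + t) * K t| ≤ M * ∫ t in -π..π, |t| * K t :=
        abs_sub_integral_comp_add_mul_le hg (continuous_of_mem_cosSpan hK)
          (fun t => mul_nonneg (inv_nonneg.mpr hI₀.le) (sq_nonneg _)) (by linarith [pi_pos]) hK₁ θ
    _ ≤ M * (3 * π / (2 * (n + 1))) := by gcongr
    _ = 3 * π * M / (2 * (n + 1)) := by ring

theorem exists_polynomial_abs_sub_eval_le_of_lipschitzOnWith {f : ℝ → ℝ} {L : ℝ≥0}
    (hf : LipschitzOnWith L f (Set.Icc 0 1)) (n : ℕ) :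
    ∃ q : ℝ[X], q.natDegree ≤ 2 * n ∧
      ∀ x ∈ Set.Icc (0 : ℝ) 1, |f x - q.eval x| ≤ 3 * π * L / (4 * (n + 1)) := by
  set h : ℝ → ℝ := fun θ => (1 + cos θ) / 2
  have hh : LipschitzWith 2⁻¹ h := LipschitzWith.of_dist_le_mul fun a b => by
    simp only [h, Real.dist_eq, NNReal.coe_inv, NNReal.coe_ofNat]
    rw [show (1 + cos a) / 2 - (1 + cos b) / 2 = (cos a - cos b) / 2 by ring, abs_div, abs_two]
    linarith [abs_cos_sub_cos_le a b]
  have hmaps : Set.MapsTo h Set.univ (Set.Icc 0 1) := fun θ _ => by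
    simp only [h, Set.mem_Icc]
    constructor <;> linarith [neg_one_le_cos θ, cos_le_one θ]
  have hg : LipschitzWith (L * 2⁻¹) (f ∘ h) :=
    lipschitzOnWith_univ.mp (hf.comp hh.lipschitzOnWith hmaps)
  obtain ⟨p, hp, hpg⟩ := exists_polynomial_abs_sub_eval_cos_le hg
    (fun θ => by simp [h, cos_add_two_pi]) (fun θ => by simp [h]) n
  refine ⟨p.comp (C 2 * X + C (-1)),
    natDegree_comp_le.trans ((Nat.mul_le_mul hp natDegree_linear_le).trans_eq (mul_one _)),
    fun x hx => ?_⟩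
  have hcos : cos (arccos (2 * x - 1)) = 2 * x - 1 :=
    cos_arccos (by linarith [hx.1]) (by linarith [hx.2])
  calc |f x - (p.comp (C 2 * X + C (-1))).eval x|
      = |(f ∘ h) (arccos (2 * x - 1)) - p.eval (cos (arccos (2 * x - 1)))| := by
        simp only [Function.comp_apply, h, hcos, eval_comp, eval_add, eval_mul, eval_C, eval_X]
        ring_nf
    _ ≤ 3 * π * ↑(L * 2⁻¹) / (2 * (n + 1)) := hpg _
    _ = 3 * π * L / (4 * (n + 1)) := by push_cast; field_simp; ring

theorem lipschitz_poly_approx_general (L ε : ℝ) (hε : 0 < ε)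
    (f : ℝ → ℝ)
    (hf : ∀ x ∈ Set.Icc (0:ℝ) 1, ∀ y ∈ Set.Icc (0:ℝ) 1, |f x - f y| ≤ L * |x - y|) :
    ∃ q : Polynomial ℝ, q.natDegree ≤ ⌈12 * L / ε⌉₊ ∧
      ∀ x ∈ Set.Icc (0:ℝ) 1, |f x - q.eval x| ≤ ε / 2 := by
  set D := ⌈12 * L / ε⌉₊
  have hlip : LipschitzOnWith L.toNNReal f (Set.Icc 0 1) :=
    LipschitzOnWith.of_dist_le_mul fun x hx y hy => (hf x hx y hy).trans
      (by rw [Real.dist_eq, Real.coe_toNNReal']; gcongr; exact le_max_left _ _)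
  obtain ⟨q, hq, hqf⟩ := exists_polynomial_abs_sub_eval_le_of_lipschitzOnWith hlip (D / 2)
  refine ⟨q, hq.trans (Nat.mul_div_le D 2), fun x hx => (hqf x hx).trans ?_⟩
  have hD : 12 * max L 0 ≤ D * ε := by
    rw [mul_max_of_nonneg _ _ (by norm_num), mul_zero]
    exact max_le ((div_le_iff₀ hε).mp (Nat.le_ceil _)) (by positivity)
  have hm : (D : ℝ) ≤ 2 * ((D / 2 : ℕ) + 1) := by
    exact_mod_cast (by omega : D ≤ 2 * (D / 2 + 1))
  rw [div_le_div_iff₀ (by positivity) two_pos, Real.coe_toNNReal']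
  nlinarith [pi_le_four, le_max_right L 0]

/-- Any `L`-Lipschitz function on `[0,1]` can be uniformly approximated within `ε/2`
by a polynomial of degree at most `⌈12L/ε⌉`. -/
theorem lipschitz_poly_approx (L ε : ℝ) (hL : 0 < L) (hε : 0 < ε)
    (f : ℝ → ℝ)
    (hf : ∀ x ∈ Set.Icc (0:ℝ) 1, ∀ y ∈ Set.Icc (0:ℝ) 1, |f x - f y| ≤ L * |x - y|) :
    ∃ q : Polynomial ℝ, q.natDegree ≤ ⌈12 * L / ε⌉₊ ∧
      ∀ x ∈ Set.Icc (0:ℝ) 1, |f x - q.eval x| ≤ ε / 2 :=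
  lipschitz_poly_approx_general L ε hε f hf
end

section
/- There exists a universal constant C > 0 with the following property. Let n ≥ 2, let the attacker's utility at target t ∈ {1,…,n} be the linear function u_t(p) = w_t·p + c_t with the normalization c_n = 0, and for a defender strategy x ∈ [0,1]^n let D^x(t) = exp(u_t(x_t)) / Σ_{i=1}^n exp(u_i(x_i)) denote the attacker's quantal response distribution. Let ρ, λ, ν, ε, δ ∈ (0,1) and let x, y, z ∈ [0,1]^n be three strategies such that (i) for every t < n, |(x_t − y_t)(x_n − z_n) − (x_n − y_n)(x_t − z_t)| ≥ λ, and (ii) for every two distinct strategies p, q among {x, y, z} and every t, |p_t − q_t| ≥ ν. Then for every m ≥ C·(1/ρ)·(1/(ε·ν·λ))²·log(n/δ) there exists an estimator (a function, depending only on n, x, y, z, m, mapping the three m-tuples of observed attacked targets to linear functions û_1, …, û_n on [0,1]) such that: for every choice of coefficients (w_t, c_t) with c_n = 0 whose induced distributions satisfy D^x(t) ≥ ρ, D^y(t) ≥ ρ, D^z(t) ≥ ρ for all t, with probability at least 1 − δ over m i.i.d. attacks drawn from each of D^x, D^y, D^z, there exists c ∈ ℝ such that |û_t(p) + c − u_t(p)|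 ≤ ε for all t ∈ {1,…,n} and all p ∈ [0,1]. -/
open MeasureTheory

/-- The quantal response distribution of an attacker with linear utilities
`u_t(p) = w t * p + c t` facing defender strategy `xv`. -/
noncomputable def quantalResp (n : ℕ) (w c xv : Fin n → ℝ) (t : Fin n) : ℝ :=
  Real.exp (w t * xv t + c t) / ∑ i, Real.exp (w i * xv i + c i)

theorem quantalResp_sum (n : ℕ) (hn : 0 < n) (w c xv : Fin n → ℝ) :
    ∑ t, ENNReal.ofReal (quantalResp n w c xv t) = 1 := by
  haveI : Nonempty (Fin n) := Fin.pos_iff_nonempty.mp hn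
  have hpos : (0:ℝ) < ∑ i, Real.exp (w i * xv i + c i) :=
    Finset.sum_pos (fun i _ => Real.exp_pos _) Finset.univ_nonempty
  have h1 : ∑ t, quantalResp n w c xv t = 1 := by
    unfold quantalResp
    rw [← Finset.sum_div, div_self hpos.ne']
  rw [← ENNReal.ofReal_sum_of_nonneg fun t _ => by unfold quantalResp; positivity,
    h1, ENNReal.ofReal_one]

/-- The quantal response distribution as a probability mass function. -/
noncomputable def quantalPMF (n : ℕ) (hn : 0 < n) (w c xv : Fin n → ℝ) : PMF (Fin n) :=
  PMF.ofFintype (fun t => ENNReal.ofReal (quantalResp n w c xv t))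
    (quantalResp_sum n hn w c xv)

/-- The distribution of `m` i.i.d. attacks drawn from the quantal response to
strategy `xv`. -/
noncomputable def sampleMeasure (n m : ℕ) (hn : 0 < n) (w c xv : Fin n → ℝ) :
    Measure (Fin m → Fin n) :=
  Measure.pi fun _ : Fin m => (quantalPMF n hn w c xv).toMeasure

/-!
The log-odds of a quantal response, `log (D^v(j) / D^v(l)) = u_j(v_j) - u_l(v_l)`, are affine in
the unknown coefficients. Subtracting them at two strategies cancels the offsets, and the
differences for `x - y` and `x - z` form a `2 × 2` linear system in `(w j, w l)` whose determinant
is the quantity bounded below by `λ`, so Cramer's rule recovers the slopes stably; with `c l = 0`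
the offsets are then read off the log-odds at `x`. A multiplicative Chernoff bound makes every
empirical frequency accurate to relative error `η` with probability `1 - δ / 3` per strategy as
soon as `m ≳ log (n / δ) / (ρ η²)`. Then the empirical log-odds are `O(η)`-accurate, the slopes
`O(η / λ)`-accurate, and `η = ε ν λ / 52` gives error at most `ε`.
-/

open ProbabilityTheory Real Finset

section Chernoff

variable {α ι : Type*} [MeasurableSpace α] [Fintype ι] {μ : Measure α} [IsProbabilityMeasure μ]
  {A : Set α}

lemma mgf_indicator_sub_le (hA : MeasurableSet A) {u : ℝ} (hu : |u| ≤ 1) :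
    mgf (fun a ↦ A.indicator 1 a - μ.real A) μ u ≤ exp (μ.real A * u ^ 2) := by
  set q := μ.real A
  have hpoint : ∀ a, exp (u * (A.indicator 1 a - q)) =
      exp (-(u * q)) * (1 + (exp u - 1) * A.indicator (1 : α → ℝ) a) := fun a ↦ by
    by_cases ha : a ∈ A
    · simp only [Set.indicator_of_mem ha, Pi.one_apply, mul_one, add_sub_cancel, ← exp_add]
      ring_nf
    · simp only [Set.indicator_of_notMem ha]; ring_nf
  have hmgf : mgf (fun a ↦ A.indicator 1 a - q) μ u =
      exp (-(u * q)) * (1 + (exp u - 1) * q) := by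
    rw [mgf, funext hpoint, integral_const_mul, integral_add (integrable_const _)
      ((integrable_const _).indicator hA |>.const_mul _), integral_const_mul,
      integral_indicator_one hA]
    simp [q]
  have hq : 0 ≤ q := measureReal_nonneg
  calc mgf (fun a ↦ A.indicator 1 a - q) μ u
      = exp (-(u * q)) * (1 + (exp u - 1) * q) := hmgf
    _ ≤ exp (-(u * q)) * exp ((u + u ^ 2) * q) := by
        -- `exp u ≤ 1 + u + u ^ 2` for `|u| ≤ 1`, then `1 + t ≤ exp t`
        gcongr
        nlinarith [le_abs_self (exp u - 1 - u), abs_exp_sub_one_sub_id_le hu,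
          add_one_le_exp ((u + u ^ 2) * q)]
    _ = exp (q * u ^ 2) := by rw [← exp_add]; ring_nf

lemma mgf_sum_pi {f : α → ℝ} (hf : Measurable f) (u : ℝ) :
    mgf (fun ω : ι → α ↦ ∑ i, f (ω i)) (Measure.pi fun _ ↦ μ) u =
      mgf f μ u ^ Fintype.card ι := by
  have hind := iIndepFun_pi (μ := fun _ : ι ↦ μ) (X := fun _ ↦ f) fun _ ↦ hf.aemeasurable
  have hcoord : ∀ i, mgf (fun ω : ι → α ↦ f (ω i)) (Measure.pi fun _ ↦ μ) u = mgf f μ u := by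
    intro i
    have hmap := integral_map (f := fun a ↦ exp (u * f a))
      (measurable_pi_apply i).aemeasurable (μ := Measure.pi fun _ : ι ↦ μ) (by fun_prop)
    rw [(measurePreserving_eval (fun _ : ι ↦ μ) i).map_eq] at hmap
    exact hmap.symm
  rw [← Finset.sum_fn, hind.mgf_sum (fun i ↦ hf.comp (measurable_pi_apply i)),
    Finset.prod_congr rfl fun i _ ↦ hcoord i, prod_const, card_univ]

lemma abs_indicator_sub_measureReal_le (a : α) : |A.indicator 1 a - μ.real A| ≤ 1 := by
  have hq₀ : 0 ≤ μ.real A := measureReal_nonneg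
  have hq₁ : μ.real A ≤ 1 := measureReal_le_one
  by_cases ha : a ∈ A
  · simp only [Set.indicator_of_mem ha, Pi.one_apply]
    rw [abs_le]; constructor <;> linarith
  · simp only [Set.indicator_of_notMem ha, zero_sub, abs_neg, abs_of_nonneg hq₀, hq₁]

/-- Multiplicative Chernoff bound for the number of sample points falling in `A`. -/
lemma measureReal_pi_abs_sum_indicator_sub_gt_le (hA : MeasurableSet A) {η : ℝ} (hη₀ : 0 ≤ η)
    (hη₂ : η ≤ 2) :
    (Measure.pi fun _ : ι ↦ μ).real
        {ω | η * (Fintype.card ι * μ.real A) <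
          |∑ i, A.indicator 1 (ω i) - Fintype.card ι * μ.real A|} ≤
      2 * exp (-(Fintype.card ι * μ.real A * η ^ 2) / 4) := by
  set P := Measure.pi fun _ : ι ↦ μ
  set q := μ.real A
  set k := Fintype.card ι * q
  set X := fun ω : ι → α ↦ ∑ i, (A.indicator 1 (ω i) - q)
  have hX : ∀ ω : ι → α, ∑ i, A.indicator 1 (ω i) - k = X ω := fun ω ↦ by
    simp only [X, k, sum_sub_distrib, sum_const, card_univ, nsmul_eq_mul]
  have hf : Measurable fun a ↦ A.indicator (1 : α → ℝ) a - q :=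
    (measurable_const.indicator hA).sub_const q
  have hmgf : ∀ u, |u| ≤ 1 → mgf X P u ≤ exp (k * u ^ 2) := fun u hu ↦ by
    rw [mgf_sum_pi hf, show k * u ^ 2 = Fintype.card ι * (q * u ^ 2) by ring, exp_nat_mul]
    exact pow_le_pow_left₀ mgf_nonneg (mgf_indicator_sub_le hA hu) _
  have hint : ∀ u, Integrable (fun ω ↦ exp (u * X ω)) P := fun u ↦ by
    refine integrable_exp_mul_of_mem_Icc (a := -Fintype.card ι) (b := Fintype.card ι)
      (by fun_prop) (ae_of_all _ fun ω ↦ abs_le.mp ?_)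
    calc |X ω| ≤ ∑ i, |A.indicator 1 (ω i) - q| := abs_sum_le_sum_abs _ _
      _ ≤ ∑ _i : ι, (1 : ℝ) := sum_le_sum fun i _ ↦ abs_indicator_sub_measureReal_le _
      _ = Fintype.card ι := by simp
  have hu : |η / 2| ≤ 1 := by rw [abs_le]; constructor <;> linarith
  have hupper : P.real {ω | η * k ≤ X ω} ≤ exp (-(k * η ^ 2) / 4) := by
    refine (measure_ge_le_exp_mul_mgf _ (by linarith : 0 ≤ η / 2) (hint _)).trans ?_
    calc exp (-(η / 2) * (η * k)) * mgf X P (η / 2)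
        ≤ exp (-(η / 2) * (η * k)) * exp (k * (η / 2) ^ 2) := by gcongr; exact hmgf _ hu
      _ = exp (-(k * η ^ 2) / 4) := by rw [← exp_add]; ring_nf
  have hlower : P.real {ω | X ω ≤ -(η * k)} ≤ exp (-(k * η ^ 2) / 4) := by
    refine (measure_le_le_exp_mul_mgf _ (by linarith : -(η / 2) ≤ 0) (hint _)).trans ?_
    calc exp (-(-(η / 2)) * -(η * k)) * mgf X P (-(η / 2))
        ≤ exp (-(-(η / 2)) * -(η * k)) * exp (k * (-(η / 2)) ^ 2) := by
          gcongr; exact hmgf _ (by rwa [abs_neg])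
      _ = exp (-(k * η ^ 2) / 4) := by rw [← exp_add]; ring_nf
  calc P.real {ω | η * k < |∑ i, A.indicator 1 (ω i) - k|}
      ≤ P.real ({ω | η * k ≤ X ω} ∪ {ω | X ω ≤ -(η * k)}) := by
        refine measureReal_mono fun ω hω ↦ ?_
        rw [Set.mem_ofPred_eq, hX, lt_abs] at hω
        rcases hω with h | h
        · exact Or.inl h.le
        · exact Or.inr (show X ω ≤ -(η * k) by linarith)
    _ ≤ 2 * exp (-(k * η ^ 2) / 4) := by
        linarith [measureReal_union_le (μ := P) {ω | η * k ≤ X ω} {ω | X ω ≤ -(η * k)}]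

end Chernoff

lemma ofReal_one_sub_le_of_measureReal_compl_le {Ω : Type*} [MeasurableSpace Ω] {P : Measure Ω}
    [IsProbabilityMeasure P] {S : Set Ω} {x : ℝ} (h : P.real Sᶜ ≤ x) :
    ENNReal.ofReal (1 - x) ≤ P S := by
  rw [← ofReal_measureReal]
  refine ENNReal.ofReal_le_ofReal ?_
  have := measureReal_union_le (μ := P) S Sᶜ
  rw [Set.union_compl_self, probReal_univ] at this
  linarith

lemma ofReal_one_sub_le_prod_prod {Ω₁ Ω₂ Ω₃ : Type*} [MeasurableSpace Ω₁] [MeasurableSpace Ω₂]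
    [MeasurableSpace Ω₃] {μ₁ : Measure Ω₁} {μ₂ : Measure Ω₂} {μ₃ : Measure Ω₃} [SFinite μ₂]
    [SFinite μ₃] {S₁ : Set Ω₁} {S₂ : Set Ω₂} {S₃ : Set Ω₃} {δ : ℝ} (hδ₀ : 0 ≤ δ) (hδ₃ : δ ≤ 3)
    (h₁ : ENNReal.ofReal (1 - δ / 3) ≤ μ₁ S₁) (h₂ : ENNReal.ofReal (1 - δ / 3) ≤ μ₂ S₂)
    (h₃ : ENNReal.ofReal (1 - δ / 3) ≤ μ₃ S₃) :
    ENNReal.ofReal (1 - δ) ≤ μ₁.prod (μ₂.prod μ₃) (S₁ ×ˢ (S₂ ×ˢ S₃)) := by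
  have hpos : 0 ≤ 1 - δ / 3 := by linarith
  calc ENNReal.ofReal (1 - δ)
      ≤ ENNReal.ofReal ((1 - δ / 3) * ((1 - δ / 3) * (1 - δ / 3))) :=
        ENNReal.ofReal_le_ofReal (by nlinarith [mul_nonneg (mul_nonneg hδ₀ hδ₀) hpos])
    _ ≤ μ₁.prod (μ₂.prod μ₃) (S₁ ×ˢ (S₂ ×ˢ S₃)) := by
        rw [Measure.prod_prod, Measure.prod_prod, ENNReal.ofReal_mul hpos,
          ENNReal.ofReal_mul hpos]
        exact mul_le_mul' h₁ (mul_le_mul' h₂ h₃)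

section Sampling

variable {α : Type*} [DecidableEq α] {m : ℕ}

def CountsNear (η : ℝ) (q : α → ℝ) (s : Fin m → α) : Prop :=
  ∀ t, |(#{i | s i = t} : ℝ) - m * q t| ≤ η * (m * q t)

lemma sum_indicator_singleton_eq_card (s : Fin m → α) (t : α) :
    ∑ i, ({t} : Set α).indicator (1 : α → ℝ) (s i) = #{i | s i = t} := by
  simp [Set.indicator_apply, sum_boole]

variable [MeasurableSpace α] [MeasurableSingletonClass α]

lemma PMF.measureReal_pi_abs_card_sub_gt_le (p : PMF α) (t : α) {η : ℝ} (hη₀ : 0 ≤ η)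
    (hη₂ : η ≤ 2) :
    (Measure.pi fun _ : Fin m ↦ p.toMeasure).real
        {s | η * (m * (p t).toReal) < |(#{i | s i = t} : ℝ) - m * (p t).toReal|} ≤
      2 * exp (-(m * (p t).toReal * η ^ 2) / 4) := by
  have h := measureReal_pi_abs_sum_indicator_sub_gt_le (ι := Fin m) (μ := p.toMeasure)
    (measurableSet_singleton t) hη₀ hη₂
  simpa only [Fintype.card_fin, sum_indicator_singleton_eq_card, measureReal_def,
    p.toMeasure_apply_singleton t (measurableSet_singleton t)] using h

lemma PMF.ofReal_le_measure_pi_countsNear [Fintype α] (p : PMF α) {ρ η : ℝ}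
    (hρ : ∀ t, ρ ≤ (p t).toReal) (hη₀ : 0 ≤ η) (hη₂ : η ≤ 2) :
    ENNReal.ofReal (1 - 2 * Fintype.card α * exp (-(m * ρ * η ^ 2) / 4)) ≤
      Measure.pi (fun _ : Fin m ↦ p.toMeasure) {s | CountsNear η (fun t ↦ (p t).toReal) s} := by
  refine ofReal_one_sub_le_of_measureReal_compl_le ?_
  set P := Measure.pi fun _ : Fin m ↦ p.toMeasure
  set bad := fun t ↦ {s : Fin m → α | η * (m * (p t).toReal) <
    |(#{i | s i = t} : ℝ) - m * (p t).toReal|}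
  calc P.real {s | CountsNear η (fun t ↦ (p t).toReal) s}ᶜ
      ≤ P.real (⋃ t, bad t) := by
        refine measureReal_mono fun s hs ↦ ?_
        simp only [CountsNear, Set.mem_compl_iff, Set.mem_ofPred_eq, not_forall, not_le] at hs
        exact Set.mem_iUnion.mpr hs
    _ ≤ ∑ t, P.real (bad t) := measureReal_iUnion_fintype_le _
    _ ≤ ∑ _t : α, 2 * exp (-(m * ρ * η ^ 2) / 4) := by
        refine sum_le_sum fun t _ ↦ (p.measureReal_pi_abs_card_sub_gt_le t hη₀ hη₂).trans ?_
        gcongr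
        exact hρ t
    _ = 2 * Fintype.card α * exp (-(m * ρ * η ^ 2) / 4) := by
        rw [sum_const, card_univ, nsmul_eq_mul]; ring

end Sampling

lemma quantalResp_pos (n : ℕ) (w c v : Fin n → ℝ) (t : Fin n) : 0 < quantalResp n w c v t :=
  div_pos (exp_pos _) (sum_pos (fun _ _ ↦ exp_pos _) ⟨t, mem_univ t⟩)

lemma quantalPMF_apply_toReal (n : ℕ) (hn : 0 < n) (w c v : Fin n → ℝ) (t : Fin n) :
    (quantalPMF n hn w c v t).toReal = quantalResp n w c v t :=
  ENNReal.toReal_ofReal (quantalResp_pos n w c v t).le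

lemma log_quantalResp_div (n : ℕ) (w c v : Fin n → ℝ) (j l : Fin n) :
    log (quantalResp n w c v j / quantalResp n w c v l) =
      (w j * v j + c j) - (w l * v l + c l) := by
  rw [quantalResp, quantalResp, div_div_div_cancel_right₀, ← exp_sub, log_exp]
  exact (sum_pos (fun _ _ ↦ exp_pos _) ⟨j, mem_univ j⟩).ne'

lemma ofReal_le_sampleMeasure_countsNear {n m : ℕ} (hn : 0 < n) (w c v : Fin n → ℝ)
    {ρ η : ℝ} (hρ : ∀ t, ρ ≤ quantalResp n w c v t) (hη₀ : 0 ≤ η) (hη₂ : η ≤ 2) :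
    ENNReal.ofReal (1 - 2 * n * exp (-(m * ρ * η ^ 2) / 4)) ≤
      sampleMeasure n m hn w c v {s | CountsNear η (quantalResp n w c v) s} := by
  have h := (quantalPMF n hn w c v).ofReal_le_measure_pi_countsNear (m := m)
    (fun t ↦ (quantalPMF_apply_toReal n hn w c v t).symm ▸ hρ t) hη₀ hη₂
  simp only [quantalPMF_apply_toReal, Fintype.card_fin] at h
  exact h

lemma pos_and_two_mul_exp_le_of_sample_size {n m : ℕ} {ρ κ a δ : ℝ} (hn : 2 ≤ n) (hρ : 0 < ρ)
    (hκ : 0 < κ) (ha : 0 < a) (hδ₀ : 0 < δ) (hδ₁ : δ < 1)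
    (hm : 16 * a ^ 2 * (1 / ρ) * (1 / κ) ^ 2 * log (n / δ) ≤ m) :
    0 < m ∧ 2 * n * exp (-(m * ρ * (κ / a) ^ 2) / 4) ≤ δ / 3 := by
  set r := (n : ℝ) / δ
  have hr : 2 ≤ r := by
    rw [le_div_iff₀ hδ₀]
    nlinarith [show (2 : ℝ) ≤ n by exact_mod_cast hn]
  have hK : 4 * log r ≤ m * (ρ * (κ / a) ^ 2 / 4) :=
    calc 4 * log r = 16 * a ^ 2 * (1 / ρ) * (1 / κ) ^ 2 * log r * (ρ * (κ / a) ^ 2 / 4) := by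
          field_simp; ring
      _ ≤ m * (ρ * (κ / a) ^ 2 / 4) := by gcongr
  have hlog : 0 < log r := log_pos (by linarith)
  refine ⟨by exact_mod_cast pos_of_mul_pos_left (hK.trans_lt' (by positivity)) (by positivity),
    ?_⟩
  have hexp : exp (-(m * ρ * (κ / a) ^ 2) / 4) ≤ (r ^ 4)⁻¹ :=
    calc exp (-(m * ρ * (κ / a) ^ 2) / 4) ≤ exp (-(4 * log r)) := by
          gcongr; linarith [show m * ρ * (κ / a) ^ 2 / 4 = m * (ρ * (κ / a) ^ 2 / 4) by ring]
      _ = (r ^ 4)⁻¹ := by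
        rw [exp_neg, show 4 * log r = log (r ^ 4) by rw [log_pow]; norm_num,
          exp_log (by positivity)]
  have hn' : (n : ℝ) = r * δ := (div_mul_cancel₀ _ hδ₀.ne').symm
  calc 2 * n * exp (-(m * ρ * (κ / a) ^ 2) / 4) ≤ 2 * (r * δ) * (r ^ 4)⁻¹ := by
        rw [hn']; gcongr
    _ = 2 * δ / r ^ 3 := by field_simp
    _ ≤ 2 * δ / 2 ^ 3 := by gcongr
    _ ≤ δ / 3 := by linarith

section Estimator

variable {α : Type*}

lemma abs_log_le_of_abs_sub_one_le {r η : ℝ} (h : |r - 1| ≤ η) (hη : η ≤ 1 / 2) :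
    |log r| ≤ 2 * η := by
  obtain ⟨h₁, h₂⟩ := abs_le.mp h
  have hr : 0 < r := by linarith
  have hinv : r⁻¹ ≤ 1 + 2 * η := by
    rw [inv_le_iff_one_le_mul₀ hr]; nlinarith
  rw [abs_le]
  constructor <;> linarith [one_sub_inv_le_log_of_pos hr, log_le_sub_one_of_pos hr]

noncomputable def empiricalLogOdds [DecidableEq α] {m : ℕ} (s : Fin m → α) (l j : α) : ℝ :=
  log ((#{i | s i = j} : ℝ) / #{i | s i = l})

lemma abs_empiricalLogOdds_sub_le [DecidableEq α] {m : ℕ} {s : Fin m → α} {q : α → ℝ} {η : ℝ}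
    (hm : 0 < m) (hq : ∀ t, 0 < q t) (hη : η ≤ 1 / 2) (hs : CountsNear η q s) (l j : α) :
    |empiricalLogOdds s l j - log (q j / q l)| ≤ 4 * η := by
  set r := fun t ↦ (#{i | s i = t} : ℝ) / (m * q t)
  have hmq : ∀ t, 0 < (m : ℝ) * q t := fun t ↦ mul_pos (Nat.cast_pos.mpr hm) (hq t)
  have hr : ∀ t, |r t - 1| ≤ η := fun t ↦ by
    rw [div_sub_one (hmq t).ne', abs_div, abs_of_pos (hmq t), div_le_iff₀ (hmq t)]
    linarith [hs t]
  have hr_pos : ∀ t, 0 < r t := fun t ↦ by linarith [(abs_le.mp (hr t)).1]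
  have hcount : ∀ t, (#{i | s i = t} : ℝ) = r t * (m * q t) := fun t ↦
    (div_mul_cancel₀ _ (hmq t).ne').symm
  have hcount_ne : ∀ t, (#{i | s i = t} : ℝ) ≠ 0 := fun t ↦ by
    rw [hcount]; exact (mul_pos (hr_pos t) (hmq t)).ne'
  have hlog_count : ∀ t, log (#{i | s i = t} : ℝ) = log (r t) + log m + log (q t) := fun t ↦ by
    rw [hcount, log_mul (hr_pos t).ne' (hmq t).ne', log_mul (by positivity) (hq t).ne', add_assoc]
  rw [empiricalLogOdds, log_div (hcount_ne j) (hcount_ne l), log_div (hq j).ne' (hq l).ne',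
    hlog_count, hlog_count]
  have hj := abs_le.mp (abs_log_le_of_abs_sub_one_le (hr j) hη)
  have hl := abs_le.mp (abs_log_le_of_abs_sub_one_le (hr l) hη)
  rw [abs_le]; constructor <;> linarith [hj.1, hj.2, hl.1, hl.2]

lemma abs_div_sub_le_of_mul_eq {a A b B X Y d w lam e : ℝ} (hd : lam ≤ |d|) (hlam : 0 < lam)
    (hw : w * d = A * X - B * Y) (ha : |a - A| ≤ e) (hb : |b - B| ≤ e) (hX : |X| ≤ 1)
    (hY : |Y| ≤ 1) :
    |(a * X - b * Y) / d - w| ≤ 2 * e / lam := by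
  have hd₀ : d ≠ 0 := fun h ↦ by rw [h, abs_zero] at hd; linarith
  have he₀ : 0 ≤ e := (abs_nonneg _).trans ha
  have hnum : |(a - A) * X - (b - B) * Y| ≤ 2 * e :=
    calc |(a - A) * X - (b - B) * Y| ≤ |a - A| * |X| + |b - B| * |Y| := by
          rw [← abs_mul, ← abs_mul]; exact abs_sub _ _
      _ ≤ e * 1 + e * 1 := by gcongr
      _ = 2 * e := by ring
  rw [show (a * X - b * Y) / d - w = ((a - A) * X - (b - B) * Y) / d by
    field_simp; linear_combination -hw, abs_div]
  exact div_le_div₀ (by linarith) hnum hlam hd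

def crossDet (x y z : α → ℝ) (l j : α) : ℝ :=
  (x j - y j) * (x l - z l) - (x l - y l) * (x j - z j)

def IsLogOddsApprox (e : ℝ) (w c v L : α → ℝ) (l : α) : Prop :=
  ∀ j, |L j - ((w j * v j + c j) - (w l * v l + c l))| ≤ e

/-- Cramer's rule for the system `Lx j - Ly j = w j (x j - y j) - w l (x l - y l)`,
`Lx j - Lz j = w j (x j - z j) - w l (x l - z l)`, solved for `w j` when `j ≠ l`, and for `w l`
at the auxiliary target `t₀` when `j = l`. -/
noncomputable def slopeEstimate [DecidableEq α] (x y z Lx Ly Lz : α → ℝ) (l t₀ j : α) : ℝ :=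
  if j = l then
    ((Lx t₀ - Ly t₀) * (x t₀ - z t₀) - (Lx t₀ - Lz t₀) * (x t₀ - y t₀)) / crossDet x y z l t₀
  else ((Lx j - Ly j) * (x l - z l) - (Lx j - Lz j) * (x l - y l)) / crossDet x y z l j

noncomputable def utilityEstimate [DecidableEq α] (x y z Lx Ly Lz : α → ℝ) (l t₀ j : α) :
    ℝ × ℝ :=
  (slopeEstimate x y z Lx Ly Lz l t₀ j,
    Lx j - slopeEstimate x y z Lx Ly Lz l t₀ j * x j + slopeEstimate x y z Lx Ly Lz l t₀ l * x l)

variable {x y z Lx Ly Lz w c : α → ℝ} {l t₀ : α} {lam e : ℝ}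

lemma IsLogOddsApprox.abs_sub_sub_le {v v' Lv Lv' : α → ℝ} (hL : IsLogOddsApprox e w c v Lv l)
    (hL' : IsLogOddsApprox e w c v' Lv' l) (j : α) :
    |(Lv j - Lv' j) - (w j * (v j - v' j) - w l * (v l - v' l))| ≤ 2 * e := by
  have h := abs_le.mp (hL j)
  have h' := abs_le.mp (hL' j)
  rw [abs_le]; constructor <;> linarith [h.1, h.2, h'.1, h'.2]

lemma abs_slopeEstimate_sub_le [DecidableEq α] (hx : ∀ t, x t ∈ Set.Icc (0 : ℝ) 1)
    (hy : ∀ t, y t ∈ Set.Icc (0 : ℝ) 1) (hz : ∀ t, z t ∈ Set.Icc (0 : ℝ) 1) (hlam : 0 < lam)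
    (hdet : ∀ j ≠ l, lam ≤ |crossDet x y z l j|) (ht₀ : t₀ ≠ l)
    (hLx : IsLogOddsApprox e w c x Lx l) (hLy : IsLogOddsApprox e w c y Ly l)
    (hLz : IsLogOddsApprox e w c z Lz l) (j : α) :
    |slopeEstimate x y z Lx Ly Lz l t₀ j - w j| ≤ 4 * e / lam := by
  have hdiff : ∀ {u v : α → ℝ}, (∀ t, u t ∈ Set.Icc (0 : ℝ) 1) → (∀ t, v t ∈ Set.Icc (0 : ℝ) 1) →
      ∀ t, |u t - v t| ≤ 1 := fun hu hv t ↦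
    abs_sub_le_of_nonneg_of_le (hu t).1 (hu t).2 (hv t).1 (hv t).2
  rw [show 4 * e / lam = 2 * (2 * e) / lam by ring, slopeEstimate]
  split_ifs with hj
  · subst hj
    exact abs_div_sub_le_of_mul_eq (hdet t₀ ht₀) hlam (by unfold crossDet; ring)
      (hLx.abs_sub_sub_le hLy t₀) (hLx.abs_sub_sub_le hLz t₀) (hdiff hx hz t₀) (hdiff hx hy t₀)
  · exact abs_div_sub_le_of_mul_eq (hdet j hj) hlam (by unfold crossDet; ring)
      (hLx.abs_sub_sub_le hLy j) (hLx.abs_sub_sub_le hLz j) (hdiff hx hz l) (hdiff hx hy l)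

lemma abs_utilityEstimate_sub_le [DecidableEq α] (hx : ∀ t, x t ∈ Set.Icc (0 : ℝ) 1)
    (hy : ∀ t, y t ∈ Set.Icc (0 : ℝ) 1) (hz : ∀ t, z t ∈ Set.Icc (0 : ℝ) 1) (hlam : 0 < lam)
    (hlam₁ : lam ≤ 1) (hdet : ∀ j ≠ l, lam ≤ |crossDet x y z l j|) (ht₀ : t₀ ≠ l)
    (hc : c l = 0) (hLx : IsLogOddsApprox e w c x Lx l) (hLy : IsLogOddsApprox e w c y Ly l)
    (hLz : IsLogOddsApprox e w c z Lz l) (j : α) {p : ℝ} (hp : p ∈ Set.Icc (0 : ℝ) 1) :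
    |(utilityEstimate x y z Lx Ly Lz l t₀ j).1 * p + (utilityEstimate x y z Lx Ly Lz l t₀ j).2 -
      (w j * p + c j)| ≤ 13 * (e / lam) := by
  set ŵ := slopeEstimate x y z Lx Ly Lz l t₀
  have hŵ : ∀ k {q}, q ∈ Set.Icc (0 : ℝ) 1 → |(ŵ k - w k) * q| ≤ 4 * (e / lam) := fun k _ hq ↦ by
    rw [abs_mul, ← mul_div_assoc]
    exact (mul_le_of_le_one_right (abs_nonneg _) (abs_le.mpr ⟨by linarith [hq.1], hq.2⟩)).trans
      (abs_slopeEstimate_sub_le hx hy hz hlam hdet ht₀ hLx hLy hLz k)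
  have he : e ≤ e / lam := le_div_self ((abs_nonneg _).trans (hLx j)) hlam hlam₁
  have hsplit : (utilityEstimate x y z Lx Ly Lz l t₀ j).1 * p +
      (utilityEstimate x y z Lx Ly Lz l t₀ j).2 - (w j * p + c j) =
      (ŵ j - w j) * p + (Lx j - ((w j * x j + c j) - (w l * x l + c l))) - (ŵ j - w j) * x j +
        (ŵ l - w l) * x l := by
    simp only [utilityEstimate, ŵ, hc]; ring
  have h₁ := abs_le.mp (hŵ j hp)
  have h₂ := abs_le.mp (hŵ j (hx j))
  have h₃ := abs_le.mp (hŵ l (hx l))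
  have h₄ := abs_le.mp (hLx j)
  rw [hsplit, abs_le]
  constructor <;> linarith [h₁.1, h₁.2, h₂.1, h₂.2, h₃.1, h₃.2, h₄.1, h₄.2]

end Estimator

lemma isLogOddsApprox_empiricalLogOdds {n m : ℕ} {w c v : Fin n → ℝ} {s : Fin m → Fin n}
    {η : ℝ} (hm : 0 < m) (hη : η ≤ 1 / 2) (hs : CountsNear η (quantalResp n w c v) s)
    (l : Fin n) : IsLogOddsApprox (4 * η) w c v (empiricalLogOdds s l) l := fun j ↦ by
  simpa only [log_quantalResp_div] using
    abs_empiricalLogOdds_sub_le hm (quantalResp_pos n w c v) hη hs l j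

/-- Learning linear attacker utilities from quantal responses to three suitably
separated strategies: there is a universal constant `C > 0` such that with
`m ≥ C·(1/ρ)·(1/(ε·ν·λ))²·log(n/δ)` samples from each of the three induced attack
distributions, an estimator (depending only on `n, x, y, z, m`) recovers, with
probability at least `1 − δ`, every utility `u_t(p) = w t * p + c t` up to a common
additive shift within uniform error `ε` on `[0,1]`. -/
theorem learn_linear_utilities_from_three_strategies :
    ∃ C : ℝ, 0 < C ∧
      ∀ (n : ℕ) (hn : 2 ≤ n) (x y z : Fin n → ℝ),
        (∀ t, x t ∈ Set.Icc (0:ℝ) 1) →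
        (∀ t, y t ∈ Set.Icc (0:ℝ) 1) →
        (∀ t, z t ∈ Set.Icc (0:ℝ) 1) →
        ∀ ρ lam ν ε δ : ℝ,
          ρ ∈ Set.Ioo (0:ℝ) 1 → lam ∈ Set.Ioo (0:ℝ) 1 → ν ∈ Set.Ioo (0:ℝ) 1 →
          ε ∈ Set.Ioo (0:ℝ) 1 → δ ∈ Set.Ioo (0:ℝ) 1 →
          (∀ t : Fin n, (t : ℕ) + 1 < n →
            lam ≤ |(x t - y t) * (x ⟨n-1, by omega⟩ - z ⟨n-1, by omega⟩) -
              (x ⟨n-1, by omega⟩ - y ⟨n-1, by omega⟩) * (x t - z t)|) →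
          (∀ t : Fin n, ν ≤ |x t - y t| ∧ ν ≤ |x t - z t| ∧ ν ≤ |y t - z t|) →
          ∀ m : ℕ, C * (1/ρ) * (1/(ε * ν * lam))^2 * Real.log (n/δ) ≤ (m : ℝ) →
            ∃ est : (Fin m → Fin n) → (Fin m → Fin n) → (Fin m → Fin n) →
                Fin n → ℝ × ℝ,
              ∀ w c : Fin n → ℝ, c ⟨n-1, by omega⟩ = 0 →
                (∀ t, ρ ≤ quantalResp n w c x t) →
                (∀ t, ρ ≤ quantalResp n w c y t) →
                (∀ t, ρ ≤ quantalResp n w c z t) →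
                ENNReal.ofReal (1 - δ) ≤
                  ((sampleMeasure n m (by omega) w c x).prod
                    ((sampleMeasure n m (by omega) w c y).prod
                      (sampleMeasure n m (by omega) w c z)))
                  {s : (Fin m → Fin n) × ((Fin m → Fin n) × (Fin m → Fin n)) |
                    ∃ cs : ℝ, ∀ t : Fin n, ∀ p ∈ Set.Icc (0:ℝ) 1,
                      |((est s.1 s.2.1 s.2.2 t).1 * p + (est s.1 s.2.1 s.2.2 t).2)
                        + cs - (w t * p + c t)| ≤ ε} := by
  refine ⟨16 * 52 ^ 2, by norm_num, ?_⟩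
  rintro n hn x y z hx hy hz ρ lam ν ε δ ⟨hρ₀, -⟩ ⟨hlam₀, hlam₁⟩ ⟨hν₀, hν₁⟩ ⟨hε₀, hε₁⟩ ⟨hδ₀, hδ₁⟩
    hdet - m hm
  set l : Fin n := ⟨n - 1, by omega⟩
  set η := ε * ν * lam / 52
  obtain ⟨hm₀, hfail⟩ := pos_and_two_mul_exp_le_of_sample_size hn hρ₀
    (by positivity : 0 < ε * ν * lam) (by norm_num : (0 : ℝ) < 52) hδ₀ hδ₁ hm
  have hεν : ε * ν < 1 := mul_lt_one_of_nonneg_of_lt_one_left hε₀.le hε₁ hν₁.le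
  have hη : η ≤ 1 / 2 := by
    have := mul_lt_one_of_nonneg_of_lt_one_left (by positivity) hεν hlam₁.le
    simp only [η]; linarith
  have hdet' : ∀ j ≠ l, lam ≤ |crossDet x y z l j| := fun j hj ↦
    hdet j (by have := Fin.val_ne_of_ne hj; simp only [l] at this; omega)
  have ht₀ : (⟨0, by omega⟩ : Fin n) ≠ l := by simp only [l, ne_eq, Fin.ext_iff]; omega
  refine ⟨fun sx sy sz ↦ utilityEstimate x y z (empiricalLogOdds sx l) (empiricalLogOdds sy l)
    (empiricalLogOdds sz l) l ⟨0, by omega⟩, fun w c hc hρx hρy hρz ↦ ?_⟩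
  have hgood : ∀ v, (∀ t, ρ ≤ quantalResp n w c v t) → ENNReal.ofReal (1 - δ / 3) ≤
      sampleMeasure n m (by omega) w c v {s | CountsNear η (quantalResp n w c v) s} :=
    fun v hv ↦ (ENNReal.ofReal_le_ofReal (by linarith)).trans
      (ofReal_le_sampleMeasure_countsNear _ w c v hv (by positivity) (by linarith))
  refine (ofReal_one_sub_le_prod_prod hδ₀.le (by linarith) (hgood x hρx) (hgood y hρy)
    (hgood z hρz)).trans (measure_mono ?_)
  rintro ⟨sx, sy, sz⟩ ⟨hsx, hsy, hsz⟩
  refine ⟨0, fun t p hp ↦ ?_⟩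
  rw [add_zero]
  refine (abs_utilityEstimate_sub_le hx hy hz hlam₀ hlam₁.le hdet' ht₀ hc
    (isLogOddsApprox_empiricalLogOdds hm₀ hη hsx l) (isLogOddsApprox_empiricalLogOdds hm₀ hη hsy l)
    (isLogOddsApprox_empiricalLogOdds hm₀ hη hsz l) t hp).trans ?_
  calc 13 * (4 * η / lam) = ε * ν := by simp only [η]; field_simp; ring
    _ ≤ ε := by nlinarith
end

section
/- Consider the two-state restless bandit arm described in the context, with parameters satisfying o₀ < o₁ (both in (0,1)), t₁' < t₁ and t₀' < t₀ (all in [0,1]), rewards R₀ ≤ R₁, and discount β ∈ (0,1). Let α = max(t₁ − t₁', t₀ − t₀'). For each subsidy m ∈ ℝ, let V_m : [0,1] → ℝ be a bounded function satisfying the Bellman equation V_m(x) = max( m + β·V_m(Γ₀(x)), r(x) + β·( p₁(x)·V_m(Γ₁(τ₁(x))) + p₀(x)·V_m(Γ₁(τ₀(x))) ) ) for all x ∈ [0,1], and write V_m(x; a=0) = m + β·V_m(Γ₀(x)) and V_m(x; a=1) = r(x) + β·( p₁(x)·V_m(Γ₁(τ₁(x))) + p₀(x)·V_m(Γ₁(τ₀(x)))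 ). If α·β ≤ 1/2 and Γ₁(1) ≤ Γ₀(0), then the arm is indexable: for every belief x ∈ [0,1] and all m' ≥ m, V_m(x; a=0) ≥ V_m(x; a=1) implies V_{m'}(x; a=0) ≥ V_{m'}(x; a=1). -/
/-- Belief propagation map: next-round belief of being in state 1, given transition
probabilities `t` (from state 1) and `t'` (from state 0). -/
def GammaMap (t t' x : ℝ) : ℝ := x * t + (1 - x) * t'

/-- Probability of observation 1 under the active action at belief `x`, with observation
probabilities `o₁` (in state 1) and `o₀` (in state 0). -/
def obsProb (o₀ o₁ x : ℝ) : ℝ := x * o₁ + (1 - x) * o₀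

/-- Bayes posterior of state 1 given observation 1. -/
noncomputable def postObs1 (o₀ o₁ x : ℝ) : ℝ := x * o₁ / obsProb o₀ o₁ x

/-- Bayes posterior of state 1 given observation 0. -/
noncomputable def postObs0 (o₀ o₁ x : ℝ) : ℝ := x * (1 - o₁) / (1 - obsProb o₀ o₁ x)

/-- Expected immediate reward of the active action at belief `x`. -/
def actReward (o₀ o₁ R₀ R₁ x : ℝ) : ℝ :=
  obsProb o₀ o₁ x * R₁ + (1 - obsProb o₀ o₁ x) * R₀

/-- Value of the passive action (subsidy `m`) at belief `x`, continuing with value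
function `V`. -/
def passiveValue (t₀ t₀' β m : ℝ) (V : ℝ → ℝ) (x : ℝ) : ℝ :=
  m + β * V (GammaMap t₀ t₀' x)

/-- Value of the active action at belief `x`, continuing with value function `V`. -/
noncomputable def activeValue (o₀ o₁ t₁ t₁' R₀ R₁ β : ℝ) (V : ℝ → ℝ) (x : ℝ) : ℝ :=
  actReward o₀ o₁ R₀ R₁ x +
    β * (obsProb o₀ o₁ x * V (GammaMap t₁ t₁' (postObs1 o₀ o₁ x)) +
      (1 - obsProb o₀ o₁ x) * V (GammaMap t₁ t₁' (postObs0 o₀ o₁ x)))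

/-!
Value iteration `V ↦ max (passive, active)` started at `0` preserves two invariants. For a single
subsidy, `V` is nondecreasing in the belief with increments at most `2ρ` per unit, where
`ρ = (o₁ - o₀)(R₁ - R₀)` is the slope of the immediate reward: the condition `(t - t') β ≤ 1/2`
makes this bound stable, and it forces the passive value to grow more slowly than the active one,
so that `active - passive` is nondecreasing in the belief. For subsidies `m ≤ m'`, the difference
`W = V_{m'} - V_m` is nonincreasing with oscillation at most `m' - m`; this uses `Γ₁(1) ≤ Γ₀(0)`,
which puts every belief reached by patrolling below every belief reached by staying passive.
Both bounds pass to the fixed points, and then going from `m` to `m'` changes `active - passive`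
at `x` by `β (E W - W (Γ₀ x)) - (m' - m) ≤ β (m' - m) - (m' - m) ≤ 0`.
-/

open Set Filter Topology

lemma min_sub_le_max_sub_max (a b c d : ℝ) : min (a - c) (b - d) ≤ max a b - max c d := by
  rcases le_total c d with h | h
  · rw [max_eq_right h]; exact (min_le_right _ _).trans (by linarith [le_max_right a b])
  · rw [max_eq_left h]; exact (min_le_left _ _).trans (by linarith [le_max_left a b])

section Belief

variable {o₀ o₁ : ℝ}

lemma obsProb_sub (u v : ℝ) : obsProb o₀ o₁ v - obsProb o₀ o₁ u = (o₁ - o₀) * (v - u) := by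
  unfold obsProb; ring

lemma obsProb_pos (h₀ : 0 < o₀) (ho : o₀ ≤ o₁) {x : ℝ} (hx : x ∈ Icc (0:ℝ) 1) :
    0 < obsProb o₀ o₁ x := by
  unfold obsProb; nlinarith [mul_nonneg hx.1 (sub_nonneg.2 ho)]

lemma obsProb_le (ho : o₀ ≤ o₁) {x : ℝ} (hx : x ∈ Icc (0:ℝ) 1) : obsProb o₀ o₁ x ≤ o₁ := by
  unfold obsProb; nlinarith [mul_nonneg (sub_nonneg.2 hx.2) (sub_nonneg.2 ho)]

lemma obsProb_lt_one (ho : o₀ ≤ o₁) (h₁ : o₁ < 1) {x : ℝ} (hx : x ∈ Icc (0:ℝ) 1) :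
    obsProb o₀ o₁ x < 1 :=
  (obsProb_le ho hx).trans_lt h₁

lemma obsProb_mul_postObs1_add_mul_postObs0 {x : ℝ} (hp₀ : obsProb o₀ o₁ x ≠ 0)
    (hp₁ : 1 - obsProb o₀ o₁ x ≠ 0) :
    obsProb o₀ o₁ x * postObs1 o₀ o₁ x + (1 - obsProb o₀ o₁ x) * postObs0 o₀ o₁ x = x := by
  unfold postObs1 postObs0
  rw [mul_div_cancel₀ _ hp₀, mul_div_cancel₀ _ hp₁]
  ring

lemma postObs1_mem_Icc (h₀ : 0 < o₀) (ho : o₀ ≤ o₁) {x : ℝ} (hx : x ∈ Icc (0:ℝ) 1) :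
    postObs1 o₀ o₁ x ∈ Icc (0:ℝ) 1 := by
  have hp := obsProb_pos h₀ ho hx
  refine ⟨div_nonneg (mul_nonneg hx.1 (h₀.le.trans ho)) hp.le, (div_le_one hp).2 ?_⟩
  unfold obsProb; nlinarith [mul_nonneg (sub_nonneg.2 hx.2) h₀.le]

lemma postObs0_mem_Icc (ho : o₀ ≤ o₁) (h₁ : o₁ < 1) {x : ℝ} (hx : x ∈ Icc (0:ℝ) 1) :
    postObs0 o₀ o₁ x ∈ Icc (0:ℝ) 1 := by
  have hp := sub_pos.2 (obsProb_lt_one ho h₁ hx)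
  refine ⟨div_nonneg (mul_nonneg hx.1 (by linarith)) hp.le, (div_le_one hp).2 ?_⟩
  unfold obsProb; nlinarith [mul_nonneg (sub_nonneg.2 hx.2) (by linarith : 0 ≤ 1 - o₀)]

lemma postObs1_monotoneOn (h₀ : 0 < o₀) (ho : o₀ ≤ o₁) :
    MonotoneOn (postObs1 o₀ o₁) (Icc 0 1) := by
  intro u hu v hv huv
  unfold postObs1
  rw [div_le_div_iff₀ (obsProb_pos h₀ ho hu) (obsProb_pos h₀ ho hv)]
  unfold obsProb
  nlinarith [mul_nonneg (mul_nonneg (h₀.le.trans ho) h₀.le) (sub_nonneg.2 huv)]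

lemma postObs0_monotoneOn (ho : o₀ ≤ o₁) (h₁ : o₁ < 1) :
    MonotoneOn (postObs0 o₀ o₁) (Icc 0 1) := by
  intro u hu v hv huv
  unfold postObs0
  rw [div_le_div_iff₀ (sub_pos.2 (obsProb_lt_one ho h₁ hu)) (sub_pos.2 (obsProb_lt_one ho h₁ hv))]
  unfold obsProb
  nlinarith [mul_nonneg (mul_nonneg (by linarith : 0 ≤ 1 - o₁) (by linarith : 0 ≤ 1 - o₀))
    (sub_nonneg.2 huv)]

lemma postObs0_le_postObs1 (h₀ : 0 < o₀) (ho : o₀ ≤ o₁) (h₁ : o₁ < 1) {x : ℝ}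
    (hx : x ∈ Icc (0:ℝ) 1) : postObs0 o₀ o₁ x ≤ postObs1 o₀ o₁ x := by
  have hp := obsProb_pos h₀ ho hx
  unfold postObs0 postObs1
  rw [div_le_div_iff₀ (sub_pos.2 (obsProb_lt_one ho h₁ hx)) hp]
  nlinarith [mul_nonneg hx.1 (sub_nonneg.2 (obsProb_le ho hx))]

end Belief

section Gamma

variable {t t' : ℝ}

lemma GammaMap_sub (u v : ℝ) : GammaMap t t' v - GammaMap t t' u = (t - t') * (v - u) := by
  unfold GammaMap; ring

lemma GammaMap_monotone (ht : t' ≤ t) : Monotone (GammaMap t t') := fun u v huv => by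
  nlinarith [GammaMap_sub (t := t) (t' := t') u v, mul_nonneg (sub_nonneg.2 ht) (sub_nonneg.2 huv)]

lemma GammaMap_mem_Icc {x : ℝ} (ht : t' ≤ t) (hx : x ∈ Icc (0:ℝ) 1) :
    GammaMap t t' x ∈ Icc t' t := by
  unfold GammaMap
  constructor <;>
    nlinarith [mul_nonneg hx.1 (sub_nonneg.2 ht), mul_nonneg (sub_nonneg.2 hx.2) (sub_nonneg.2 ht)]

lemma GammaMap_mem_unit {x : ℝ} (ht : t' ≤ t) (ht' : 0 ≤ t') (ht1 : t ≤ 1) (hx : x ∈ Icc (0:ℝ) 1) :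
    GammaMap t t' x ∈ Icc (0:ℝ) 1 :=
  Icc_subset_Icc ht' ht1 (GammaMap_mem_Icc ht hx)

end Gamma

def SlopeLEOn (L : ℝ) (f : ℝ → ℝ) (s : Set ℝ) : Prop :=
  ∀ ⦃p⦄, p ∈ s → ∀ ⦃q⦄, q ∈ s → p ≤ q → f q - f p ≤ L * (q - p)

lemma SlopeLEOn.mono {L L' : ℝ} {f : ℝ → ℝ} {s : Set ℝ} (h : SlopeLEOn L f s) (hL : L ≤ L') :
    SlopeLEOn L' f s := fun _ hp _ hq hpq =>
  (h hp hq hpq).trans (mul_le_mul_of_nonneg_right hL (sub_nonneg.2 hpq))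

lemma SlopeLEOn.max {L : ℝ} {f g : ℝ → ℝ} {s : Set ℝ} (hf : SlopeLEOn L f s)
    (hg : SlopeLEOn L g s) : SlopeLEOn L (fun x => max (f x) (g x)) s := fun p hp q hq hpq => by
  have := max_le_max (sub_le_iff_le_add'.1 (hf hp hq hpq)) (sub_le_iff_le_add'.1 (hg hp hq hpq))
  rw [max_add_add_right] at this
  linarith

lemma SlopeLEOn.monotoneOn_mul_sub {L : ℝ} {f : ℝ → ℝ} {s : Set ℝ} (h : SlopeLEOn L f s) :
    MonotoneOn (fun y => L * y - f y) s := fun p hp q hq hpq => by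
  have := h hp hq hpq
  simp only
  linarith

def OscLEOn (Δ : ℝ) (f : ℝ → ℝ) (s : Set ℝ) : Prop :=
  ∀ ⦃p⦄, p ∈ s → ∀ ⦃q⦄, q ∈ s → f p - f q ≤ Δ

structure TwoStateArm where
  (o₀ o₁ t₁ t₁' t₀ t₀' R₀ R₁ β : ℝ)
  ho₀ : 0 < o₀
  ho : o₀ ≤ o₁
  ho₁ : o₁ < 1
  ht₁ : t₁' ≤ t₁
  ht₀ : t₀' ≤ t₀
  ht₁'_nonneg : 0 ≤ t₁'
  ht₁_le_one : t₁ ≤ 1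
  ht₀'_nonneg : 0 ≤ t₀'
  ht₀_le_one : t₀ ≤ 1
  hR : R₀ ≤ R₁
  hβ_nonneg : 0 ≤ β
  hβ_lt_one : β < 1

namespace TwoStateArm

variable (A : TwoStateArm) {x y : ℝ}

def p (x : ℝ) : ℝ := obsProb A.o₀ A.o₁ x

noncomputable def next₁ (x : ℝ) : ℝ := GammaMap A.t₁ A.t₁' (postObs1 A.o₀ A.o₁ x)

noncomputable def next₀ (x : ℝ) : ℝ := GammaMap A.t₁ A.t₁' (postObs0 A.o₀ A.o₁ x)

def nextPassive (x : ℝ) : ℝ := GammaMap A.t₀ A.t₀' x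

noncomputable def expect (f : ℝ → ℝ) (x : ℝ) : ℝ :=
  A.p x * f (A.next₁ x) + (1 - A.p x) * f (A.next₀ x)

def passive (m : ℝ) (f : ℝ → ℝ) (x : ℝ) : ℝ := passiveValue A.t₀ A.t₀' A.β m f x

noncomputable def active (f : ℝ → ℝ) (x : ℝ) : ℝ :=
  activeValue A.o₀ A.o₁ A.t₁ A.t₁' A.R₀ A.R₁ A.β f x

noncomputable def bellman (m : ℝ) (f : ℝ → ℝ) (x : ℝ) : ℝ := max (A.passive m f x) (A.active f x)

def slope : ℝ := (A.o₁ - A.o₀) * (A.R₁ - A.R₀)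

lemma passive_eq (m : ℝ) (f : ℝ → ℝ) (x : ℝ) :
    A.passive m f x = m + A.β * f (A.nextPassive x) := rfl

lemma active_eq (f : ℝ → ℝ) (x : ℝ) :
    A.active f x = actReward A.o₀ A.o₁ A.R₀ A.R₁ x + A.β * A.expect f x := rfl

lemma actReward_sub (u v : ℝ) :
    actReward A.o₀ A.o₁ A.R₀ A.R₁ v - actReward A.o₀ A.o₁ A.R₀ A.R₁ u = A.slope * (v - u) := by
  unfold actReward obsProb slope; ring

lemma slope_nonneg : 0 ≤ A.slope := mul_nonneg (sub_nonneg.2 A.ho) (sub_nonneg.2 A.hR)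

lemma p_pos (hx : x ∈ Icc (0:ℝ) 1) : 0 < A.p x := obsProb_pos A.ho₀ A.ho hx

lemma one_sub_p_pos (hx : x ∈ Icc (0:ℝ) 1) : 0 < 1 - A.p x :=
  sub_pos.2 (obsProb_lt_one A.ho A.ho₁ hx)

lemma p_monotone : Monotone A.p := fun u v huv => by
  have := obsProb_sub (o₀ := A.o₀) (o₁ := A.o₁) u v
  unfold p
  nlinarith [mul_nonneg (sub_nonneg.2 A.ho) (sub_nonneg.2 huv)]

lemma next₁_mem (hx : x ∈ Icc (0:ℝ) 1) : A.next₁ x ∈ Icc (0:ℝ) 1 :=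
  GammaMap_mem_unit A.ht₁ A.ht₁'_nonneg A.ht₁_le_one (postObs1_mem_Icc A.ho₀ A.ho hx)

lemma next₀_mem (hx : x ∈ Icc (0:ℝ) 1) : A.next₀ x ∈ Icc (0:ℝ) 1 :=
  GammaMap_mem_unit A.ht₁ A.ht₁'_nonneg A.ht₁_le_one (postObs0_mem_Icc A.ho A.ho₁ hx)

lemma nextPassive_mem (hx : x ∈ Icc (0:ℝ) 1) : A.nextPassive x ∈ Icc (0:ℝ) 1 :=
  GammaMap_mem_unit A.ht₀ A.ht₀'_nonneg A.ht₀_le_one hx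

lemma next₁_monotoneOn : MonotoneOn A.next₁ (Icc 0 1) :=
  (GammaMap_monotone A.ht₁).comp_monotoneOn (postObs1_monotoneOn A.ho₀ A.ho)

lemma next₀_monotoneOn : MonotoneOn A.next₀ (Icc 0 1) :=
  (GammaMap_monotone A.ht₁).comp_monotoneOn (postObs0_monotoneOn A.ho A.ho₁)

lemma next₀_le_next₁ (hx : x ∈ Icc (0:ℝ) 1) : A.next₀ x ≤ A.next₁ x :=
  GammaMap_monotone A.ht₁ (postObs0_le_postObs1 A.ho₀ A.ho A.ho₁ hx)

lemma nextPassive_monotone : Monotone A.nextPassive := GammaMap_monotone A.ht₀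

lemma next_le_nextPassive (hΓ : GammaMap A.t₁ A.t₁' 1 ≤ GammaMap A.t₀ A.t₀' 0)
    (hx : x ∈ Icc (0:ℝ) 1) (hy : y ∈ Icc (0:ℝ) 1) :
    A.next₁ x ≤ A.nextPassive y ∧ A.next₀ x ≤ A.nextPassive y := by
  have hΓ' : A.t₁ ≤ A.t₀' := by simpa [GammaMap] using hΓ
  have h₀ := (GammaMap_mem_Icc A.ht₀ hy).1
  exact ⟨(GammaMap_mem_Icc A.ht₁ (postObs1_mem_Icc A.ho₀ A.ho hx)).2.trans (hΓ'.trans h₀),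
    (GammaMap_mem_Icc A.ht₁ (postObs0_mem_Icc A.ho A.ho₁ hx)).2.trans (hΓ'.trans h₀)⟩

lemma expect_le {h : ℝ → ℝ} {c : ℝ} (hx : x ∈ Icc (0:ℝ) 1) (h₁ : h (A.next₁ x) ≤ c)
    (h₀ : h (A.next₀ x) ≤ c) : A.expect h x ≤ c := by
  unfold expect
  nlinarith [A.p_pos hx, A.one_sub_p_pos hx]

lemma le_expect {h : ℝ → ℝ} {c : ℝ} (hx : x ∈ Icc (0:ℝ) 1) (h₁ : c ≤ h (A.next₁ x))
    (h₀ : c ≤ h (A.next₀ x)) : c ≤ A.expect h x := by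
  unfold expect
  nlinarith [A.p_pos hx, A.one_sub_p_pos hx]

lemma expect_sub_le {h : ℝ → ℝ} {c w : ℝ} (hosc : OscLEOn c h (Icc 0 1))
    (hx : x ∈ Icc (0:ℝ) 1) (hw : w ∈ Icc (0:ℝ) 1) : A.expect h x - h w ≤ c :=
  sub_le_iff_le_add'.2 <| A.expect_le hx
    (le_add_of_sub_left_le (hosc (A.next₁_mem hx) hw))
    (le_add_of_sub_left_le (hosc (A.next₀_mem hx) hw))

lemma expect_sub_expect_le {h : ℝ → ℝ} {c : ℝ} (hosc : OscLEOn c h (Icc 0 1))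
    (hx : x ∈ Icc (0:ℝ) 1) (hy : y ∈ Icc (0:ℝ) 1) : A.expect h x - A.expect h y ≤ c :=
  sub_le_comm.1 <| A.le_expect hy
    (sub_le_comm.1 (A.expect_sub_le hosc hx (A.next₁_mem hy)))
    (sub_le_comm.1 (A.expect_sub_le hosc hx (A.next₀_mem hy)))

lemma expect_sub (f g : ℝ → ℝ) (x : ℝ) : A.expect (g - f) x = A.expect g x - A.expect f x := by
  unfold expect; simp only [Pi.sub_apply]; ring

lemma expect_id (hx : x ∈ Icc (0:ℝ) 1) : A.expect id x = GammaMap A.t₁ A.t₁' x := by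
  have h := obsProb_mul_postObs1_add_mul_postObs0 (A.p_pos hx).ne' (A.one_sub_p_pos hx).ne'
  unfold expect next₁ next₀ GammaMap p
  simp only [id]
  linear_combination (A.t₁ - A.t₁') * h

lemma expect_monotoneOn {f : ℝ → ℝ} (hf : MonotoneOn f (Icc 0 1)) :
    MonotoneOn (A.expect f) (Icc 0 1) := by
  intro u hu v hv huv
  have h₁ := hf (A.next₁_mem hu) (A.next₁_mem hv) (A.next₁_monotoneOn hu hv huv)
  have h₀ := hf (A.next₀_mem hu) (A.next₀_mem hv) (A.next₀_monotoneOn hu hv huv)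
  have hsplit := hf (A.next₀_mem hu) (A.next₁_mem hu) (A.next₀_le_next₁ hu)
  have hp := A.p_monotone huv
  have : A.expect f v - A.expect f u = A.p v * (f (A.next₁ v) - f (A.next₁ u))
      + (1 - A.p v) * (f (A.next₀ v) - f (A.next₀ u))
      + (A.p v - A.p u) * (f (A.next₁ u) - f (A.next₀ u)) := by
    unfold expect; ring
  nlinarith [A.p_pos hv, A.one_sub_p_pos hv]

lemma expect_antitoneOn {f : ℝ → ℝ} (hf : AntitoneOn f (Icc 0 1)) :
    AntitoneOn (A.expect f) (Icc 0 1) := by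
  intro u hu v hv huv
  have := A.expect_monotoneOn hf.neg hu hv huv
  unfold expect at this ⊢
  linarith

lemma expect_slopeLEOn {L : ℝ} {f : ℝ → ℝ} (hf : SlopeLEOn L f (Icc 0 1)) :
    SlopeLEOn (L * (A.t₁ - A.t₁')) (A.expect f) (Icc 0 1) := by
  intro u hu v hv huv
  have key := A.expect_monotoneOn hf.monotoneOn_mul_sub hu hv huv
  have hg : ∀ x ∈ Icc (0:ℝ) 1,
      A.expect (fun y => L * y - f y) x = L * GammaMap A.t₁ A.t₁' x - A.expect f x := by
    intro x hx
    rw [← A.expect_id hx]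
    unfold expect; simp only [id]; ring
  rw [hg u hu, hg v hv] at key
  calc A.expect f v - A.expect f u
      ≤ L * (GammaMap A.t₁ A.t₁' v - GammaMap A.t₁ A.t₁' u) := by linarith
    _ = L * (A.t₁ - A.t₁') * (v - u) := by rw [GammaMap_sub]; ring

def IsRegular (f : ℝ → ℝ) : Prop :=
  MonotoneOn f (Icc 0 1) ∧ SlopeLEOn (2 * A.slope) f (Icc 0 1)

variable {m m' : ℝ} {f f' g : ℝ → ℝ}

lemma passive_monotoneOn (hf : MonotoneOn f (Icc 0 1)) : MonotoneOn (A.passive m f) (Icc 0 1) :=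
  fun u hu v hv huv => by
    have := hf (A.nextPassive_mem hu) (A.nextPassive_mem hv) (A.nextPassive_monotone huv)
    simp only [passive_eq]
    nlinarith [A.hβ_nonneg]

lemma passive_slopeLEOn (hβ₀ : (A.t₀ - A.t₀') * A.β ≤ 1 / 2)
    (hf : SlopeLEOn (2 * A.slope) f (Icc 0 1)) : SlopeLEOn A.slope (A.passive m f) (Icc 0 1) :=
  fun u hu v hv huv => by
    have h := hf (A.nextPassive_mem hu) (A.nextPassive_mem hv) (A.nextPassive_monotone huv)
    rw [nextPassive, nextPassive, GammaMap_sub] at h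
    have hβ := mul_le_mul_of_nonneg_left h A.hβ_nonneg
    have hρ := mul_le_mul_of_nonneg_right hβ₀ (mul_nonneg A.slope_nonneg (sub_nonneg.2 huv))
    simp only [passive_eq, nextPassive]
    linarith

lemma slope_mul_le_active_sub (hf : MonotoneOn f (Icc 0 1)) {u v : ℝ} (hu : u ∈ Icc (0:ℝ) 1)
    (hv : v ∈ Icc (0:ℝ) 1) (huv : u ≤ v) : A.slope * (v - u) ≤ A.active f v - A.active f u := by
  have h := mul_le_mul_of_nonneg_left (A.expect_monotoneOn hf hu hv huv) A.hβ_nonneg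
  have := A.actReward_sub u v
  simp only [active_eq]
  linarith

lemma active_monotoneOn (hf : MonotoneOn f (Icc 0 1)) : MonotoneOn (A.active f) (Icc 0 1) :=
  fun u hu v hv huv => by
    nlinarith [A.slope_mul_le_active_sub hf hu hv huv, mul_nonneg A.slope_nonneg (sub_nonneg.2 huv)]

lemma active_slopeLEOn (hβ₁ : (A.t₁ - A.t₁') * A.β ≤ 1 / 2)
    (hf : SlopeLEOn (2 * A.slope) f (Icc 0 1)) :
    SlopeLEOn (2 * A.slope) (A.active f) (Icc 0 1) := fun u hu v hv huv => by
  have h := mul_le_mul_of_nonneg_left (A.expect_slopeLEOn hf hu hv huv) A.hβ_nonneg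
  have := A.actReward_sub u v
  simp only [active_eq]
  nlinarith [mul_nonneg A.slope_nonneg (sub_nonneg.2 huv)]

lemma passive_sub_le_active_sub (hβ₀ : (A.t₀ - A.t₀') * A.β ≤ 1 / 2)
    (hg : SlopeLEOn (2 * A.slope) g (Icc 0 1)) (hf : MonotoneOn f (Icc 0 1)) {u v : ℝ}
    (hu : u ∈ Icc (0:ℝ) 1) (hv : v ∈ Icc (0:ℝ) 1) (huv : u ≤ v) :
    A.passive m g v - A.passive m g u ≤ A.active f v - A.active f u :=
  (A.passive_slopeLEOn hβ₀ hg hu hv huv).trans (A.slope_mul_le_active_sub hf hu hv huv)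

lemma bellman_isRegular (hβ₀ : (A.t₀ - A.t₀') * A.β ≤ 1 / 2)
    (hβ₁ : (A.t₁ - A.t₁') * A.β ≤ 1 / 2) (hf : A.IsRegular f) : A.IsRegular (A.bellman m f) :=
  ⟨(A.passive_monotoneOn hf.1).max (A.active_monotoneOn hf.1),
    ((A.passive_slopeLEOn hβ₀ hf.2).mono (by linarith [A.slope_nonneg])).max
      (A.active_slopeLEOn hβ₁ hf.2)⟩

lemma passive_sub_passive (x : ℝ) :
    A.passive m' f' x - A.passive m f x = (m' - m) + A.β * (f' - f) (A.nextPassive x) := by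
  simp only [passive_eq, Pi.sub_apply]; ring

lemma active_sub_active (x : ℝ) : A.active f' x - A.active f x = A.β * A.expect (f' - f) x := by
  rw [active_eq, active_eq, expect_sub]; ring

lemma bellman_sub_le (x : ℝ) : A.bellman m' f' x - A.bellman m f x ≤
    max ((m' - m) + A.β * (f' - f) (A.nextPassive x)) (A.β * A.expect (f' - f) x) := by
  rw [← passive_sub_passive, ← active_sub_active]
  exact max_sub_max_le_max _ _ _ _

lemma le_bellman_sub (x : ℝ) :
    min ((m' - m) + A.β * (f' - f) (A.nextPassive x)) (A.β * A.expect (f' - f) x) ≤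
      A.bellman m' f' x - A.bellman m f x := by
  rw [← passive_sub_passive, ← active_sub_active]
  exact min_sub_le_max_sub_max _ _ _ _

lemma bellman_sub_oscLEOn (hΓ : GammaMap A.t₁ A.t₁' 1 ≤ GammaMap A.t₀ A.t₀' 0) (hm : m ≤ m')
    (hW : AntitoneOn (f' - f) (Icc 0 1)) (hosc : OscLEOn (m' - m) (f' - f) (Icc 0 1)) :
    OscLEOn (m' - m) (A.bellman m' f' - A.bellman m f) (Icc 0 1) := by
  intro u hu v hv
  have hβΔ : A.β * (m' - m) ≤ m' - m := mul_le_of_le_one_left (by linarith) A.hβ_lt_one.le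
  have hnext := A.next_le_nextPassive hΓ hv hu
  have hPP := hosc (A.nextPassive_mem hu) (A.nextPassive_mem hv)
  have hPA : (f' - f) (A.nextPassive u) ≤ A.expect (f' - f) v :=
    A.le_expect hv (hW (A.next₁_mem hv) (A.nextPassive_mem hu) hnext.1)
      (hW (A.next₀_mem hv) (A.nextPassive_mem hu) hnext.2)
  have hAP := A.expect_sub_le hosc hu (A.nextPassive_mem hv)
  have hAA := A.expect_sub_expect_le hosc hu hv
  have key : max ((m' - m) + A.β * (f' - f) (A.nextPassive u)) (A.β * A.expect (f' - f) u) ≤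
      min ((m' - m) + A.β * (f' - f) (A.nextPassive v)) (A.β * A.expect (f' - f) v) + (m' - m) := by
    rw [← min_add_add_right]
    refine max_le (le_min ?_ ?_) (le_min ?_ ?_) <;> nlinarith [A.hβ_nonneg]
  have := A.bellman_sub_le (m := m) (m' := m') (f := f) (f' := f') u
  have := A.le_bellman_sub (m := m) (m' := m') (f := f) (f' := f') v
  simp only [Pi.sub_apply]
  linarith

lemma bellman_sub_antitoneOn (hβ₀ : (A.t₀ - A.t₀') * A.β ≤ 1 / 2) (hm : m ≤ m')
    (hf : MonotoneOn f (Icc 0 1)) (hf' : A.IsRegular f') (hW : AntitoneOn (f' - f) (Icc 0 1))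
    (hosc : OscLEOn (m' - m) (f' - f) (Icc 0 1)) :
    AntitoneOn (A.bellman m' f' - A.bellman m f) (Icc 0 1) := by
  intro u hu v hv huv
  simp only [Pi.sub_apply]
  rcases le_total (A.active f' v) (A.passive m' f' v) with hv' | hv'
  · -- `active - passive` is nondecreasing in the belief, so passivity under `m'` persists at `u`
    have hu' : A.active f' u ≤ A.passive m' f' u := by
      linarith [A.passive_sub_le_active_sub hβ₀ hf'.2 hf'.1 (m := m') hu hv huv]
    have hP : A.passive m f u + (A.passive m' f' v - A.passive m' f' u) ≤ A.passive m f v := by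
      have := hW (A.nextPassive_mem hu) (A.nextPassive_mem hv) (A.nextPassive_monotone huv)
      have := A.passive_sub_passive (m := m) (m' := m') (f := f) (f' := f') u
      have := A.passive_sub_passive (m := m) (m' := m') (f := f) (f' := f') v
      nlinarith [A.hβ_nonneg]
    have hA : A.active f u + (A.passive m' f' v - A.passive m' f' u) ≤ A.active f v := by
      linarith [A.passive_sub_le_active_sub hβ₀ hf'.2 hf (m := m') hu hv huv]
    have := max_le_max hP hA
    rw [max_add_add_right] at this
    unfold bellman
    rw [max_eq_left hv', max_eq_left hu']
    linarith
  · have hvup : A.bellman m' f' v - A.bellman m f v ≤ A.β * A.expect (f' - f) v := by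
      have := A.active_sub_active (f := f) (f' := f') v
      have := le_max_right (A.passive m f v) (A.active f v)
      unfold bellman
      rw [max_eq_right hv']
      linarith
    have hAA := mul_le_mul_of_nonneg_left (A.expect_antitoneOn hW hu hv huv) A.hβ_nonneg
    have hAP := mul_le_mul_of_nonneg_left (A.expect_sub_le hosc hv (A.nextPassive_mem hu))
      A.hβ_nonneg
    have hβΔ : A.β * (m' - m) ≤ m' - m := mul_le_of_le_one_left (by linarith) A.hβ_lt_one.le
    have := A.le_bellman_sub (m := m) (m' := m') (f := f) (f' := f') u
    refine hvup.trans (le_trans (le_min ?_ ?_) this) <;> linarith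

lemma abs_bellman_sub_le {c : ℝ} (h : ∀ y ∈ Icc (0:ℝ) 1, |f' y - f y| ≤ c) (hx : x ∈ Icc (0:ℝ) 1) :
    |A.bellman m f' x - A.bellman m f x| ≤ A.β * c := by
  have hW : ∀ y ∈ Icc (0:ℝ) 1, -c ≤ (f' - f) y ∧ (f' - f) y ≤ c := fun y hy => abs_le.1 (h y hy)
  have hP := hW _ (A.nextPassive_mem hx)
  have hE₁ := A.expect_le hx (hW _ (A.next₁_mem hx)).2 (hW _ (A.next₀_mem hx)).2
  have hE₀ := A.le_expect hx (hW _ (A.next₁_mem hx)).1 (hW _ (A.next₀_mem hx)).1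
  have hup := A.bellman_sub_le (m := m) (m' := m) (f := f) (f' := f') x
  have hlo := A.le_bellman_sub (m := m) (m' := m) (f := f) (f' := f') x
  rw [sub_self, zero_add] at hup hlo
  have hβ := A.hβ_nonneg
  refine abs_le.2 ⟨le_trans ?_ hlo, hup.trans ?_⟩
  · exact le_min (by nlinarith) (by nlinarith)
  · exact max_le (by nlinarith) (by nlinarith)

lemma abs_sub_bellman_iterate_le {V : ℝ → ℝ} {C : ℝ}
    (hV : ∀ x ∈ Icc (0:ℝ) 1, V x = A.bellman m V x) (hC : ∀ x ∈ Icc (0:ℝ) 1, |V x| ≤ C) (n : ℕ) :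
    ∀ x ∈ Icc (0:ℝ) 1, |V x - (A.bellman m)^[n] 0 x| ≤ A.β ^ n * C := by
  induction n with
  | zero => simpa using hC
  | succ n ih =>
    intro x hx
    rw [Function.iterate_succ_apply', hV x hx, pow_succ', mul_assoc]
    exact A.abs_bellman_sub_le ih hx

lemma isRegular_bellman_iterate (hβ₀ : (A.t₀ - A.t₀') * A.β ≤ 1 / 2)
    (hβ₁ : (A.t₁ - A.t₁') * A.β ≤ 1 / 2) (n : ℕ) : A.IsRegular ((A.bellman m)^[n] 0) := by
  induction n with
  | zero =>
    refine ⟨monotoneOn_const, fun p _ q _ hpq => ?_⟩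
    simpa using mul_nonneg (mul_nonneg zero_le_two A.slope_nonneg) (sub_nonneg.2 hpq)
  | succ n ih =>
    rw [Function.iterate_succ']
    exact A.bellman_isRegular hβ₀ hβ₁ ih

lemma antitoneOn_and_oscLEOn_bellman_iterate_sub (hβ₀ : (A.t₀ - A.t₀') * A.β ≤ 1 / 2)
    (hβ₁ : (A.t₁ - A.t₁') * A.β ≤ 1 / 2) (hΓ : GammaMap A.t₁ A.t₁' 1 ≤ GammaMap A.t₀ A.t₀' 0)
    (hm : m ≤ m') (n : ℕ) :
    AntitoneOn ((A.bellman m')^[n] 0 - (A.bellman m)^[n] 0) (Icc 0 1) ∧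
      OscLEOn (m' - m) ((A.bellman m')^[n] 0 - (A.bellman m)^[n] 0) (Icc 0 1) := by
  induction n with
  | zero =>
    refine ⟨fun _ _ _ _ _ => le_rfl, fun _ _ _ _ => ?_⟩
    simpa using hm
  | succ n ih =>
    rw [Function.iterate_succ', Function.iterate_succ']
    exact ⟨A.bellman_sub_antitoneOn hβ₀ hm (A.isRegular_bellman_iterate hβ₀ hβ₁ n).1
        (A.isRegular_bellman_iterate hβ₀ hβ₁ n) ih.1 ih.2,
      A.bellman_sub_oscLEOn hΓ hm ih.1 ih.2⟩

lemma oscLEOn_sub_of_bellman_fixed (hβ₀ : (A.t₀ - A.t₀') * A.β ≤ 1 / 2)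
    (hβ₁ : (A.t₁ - A.t₁') * A.β ≤ 1 / 2) (hΓ : GammaMap A.t₁ A.t₁' 1 ≤ GammaMap A.t₀ A.t₀' 0)
    (hm : m ≤ m') {V V' : ℝ → ℝ} {C C' : ℝ}
    (hV : ∀ x ∈ Icc (0:ℝ) 1, V x = A.bellman m V x)
    (hV' : ∀ x ∈ Icc (0:ℝ) 1, V' x = A.bellman m' V' x)
    (hC : ∀ x ∈ Icc (0:ℝ) 1, |V x| ≤ C) (hC' : ∀ x ∈ Icc (0:ℝ) 1, |V' x| ≤ C') :
    OscLEOn (m' - m) (V' - V) (Icc 0 1) := by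
  intro u hu v hv
  have hlim : Tendsto (fun n : ℕ => (m' - m) + A.β ^ n * (2 * (C + C'))) atTop
      (𝓝 ((m' - m) + 0 * (2 * (C + C')))) :=
    ((tendsto_pow_atTop_nhds_zero_of_lt_one A.hβ_nonneg A.hβ_lt_one).mul_const _).const_add _
  rw [zero_mul, add_zero] at hlim
  refine ge_of_tendsto' hlim fun n => ?_
  have hn := (A.antitoneOn_and_oscLEOn_bellman_iterate_sub hβ₀ hβ₁ hΓ hm n).2 hu hv
  have h₁ := abs_le.1 (A.abs_sub_bellman_iterate_le hV hC n u hu)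
  have h₂ := abs_le.1 (A.abs_sub_bellman_iterate_le hV hC n v hv)
  have h₃ := abs_le.1 (A.abs_sub_bellman_iterate_le hV' hC' n u hu)
  have h₄ := abs_le.1 (A.abs_sub_bellman_iterate_le hV' hC' n v hv)
  simp only [Pi.sub_apply] at hn ⊢
  linarith [h₁.1, h₁.2, h₂.1, h₂.2, h₃.1, h₃.2, h₄.1, h₄.2]

lemma active_sub_passive_le_of_oscLEOn (hm : m ≤ m') (hosc : OscLEOn (m' - m) (f' - f) (Icc 0 1))
    (hx : x ∈ Icc (0:ℝ) 1) :
    A.active f' x - A.passive m' f' x ≤ A.active f x - A.passive m f x := by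
  have h := mul_le_mul_of_nonneg_left (A.expect_sub_le hosc hx (A.nextPassive_mem hx))
    A.hβ_nonneg
  have hβΔ : A.β * (m' - m) ≤ m' - m := mul_le_of_le_one_left (by linarith) A.hβ_lt_one.le
  have := A.active_sub_active (f := f) (f' := f') x
  have := A.passive_sub_passive (m := m) (m' := m') (f := f) (f' := f') x
  linarith

end TwoStateArm

/-- Indexability of the two-state restless bandit arm when
`α·β ≤ 1/2` and `Γ₁(1) ≤ Γ₀(0)`: if the passive action is optimal at belief `x`
with subsidy `m`, it remains optimal with every larger subsidy `m'`. -/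
theorem indexable_of_alpha_beta_le_half
    (o₀ o₁ t₁ t₁' t₀ t₀' R₀ R₁ β : ℝ)
    (ho₀ : o₀ ∈ Set.Ioo (0:ℝ) 1) (ho₁ : o₁ ∈ Set.Ioo (0:ℝ) 1) (ho : o₀ < o₁)
    (ht₁lt : t₁' < t₁) (ht₀lt : t₀' < t₀)
    (ht₁ : t₁ ∈ Set.Icc (0:ℝ) 1) (ht₁' : t₁' ∈ Set.Icc (0:ℝ) 1)
    (ht₀ : t₀ ∈ Set.Icc (0:ℝ) 1) (ht₀' : t₀' ∈ Set.Icc (0:ℝ) 1)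
    (hR : R₀ ≤ R₁) (hβ : β ∈ Set.Ioo (0:ℝ) 1)
    (V : ℝ → ℝ → ℝ)
    (hbdd : ∀ m : ℝ, ∃ M : ℝ, ∀ x ∈ Set.Icc (0:ℝ) 1, |V m x| ≤ M)
    (hbellman : ∀ m : ℝ, ∀ x ∈ Set.Icc (0:ℝ) 1,
      V m x = max (passiveValue t₀ t₀' β m (V m) x)
        (activeValue o₀ o₁ t₁ t₁' R₀ R₁ β (V m) x))
    (hαβ : max (t₁ - t₁') (t₀ - t₀') * β ≤ 1/2)
    (hΓ : GammaMap t₁ t₁' 1 ≤ GammaMap t₀ t₀' 0) :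
    ∀ x ∈ Set.Icc (0:ℝ) 1, ∀ m m' : ℝ, m ≤ m' →
      activeValue o₀ o₁ t₁ t₁' R₀ R₁ β (V m) x ≤ passiveValue t₀ t₀' β m (V m) x →
      activeValue o₀ o₁ t₁ t₁' R₀ R₁ β (V m') x ≤ passiveValue t₀ t₀' β m' (V m') x := by
  intro x hx m m' hm hpassive
  let A : TwoStateArm := ⟨o₀, o₁, t₁, t₁', t₀, t₀', R₀, R₁, β, ho₀.1, ho.le, ho₁.2, ht₁lt.le,
    ht₀lt.le, ht₁'.1, ht₁.2, ht₀'.1, ht₀.2, hR, hβ.1.le, hβ.2⟩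
  have hβ₁ : (t₁ - t₁') * β ≤ 1 / 2 :=
    (mul_le_mul_of_nonneg_right (le_max_left _ _) hβ.1.le).trans hαβ
  have hβ₀ : (t₀ - t₀') * β ≤ 1 / 2 :=
    (mul_le_mul_of_nonneg_right (le_max_right _ _) hβ.1.le).trans hαβ
  obtain ⟨C, hC⟩ := hbdd m
  obtain ⟨C', hC'⟩ := hbdd m'
  have hosc := A.oscLEOn_sub_of_bellman_fixed hβ₀ hβ₁ hΓ hm (hbellman m) (hbellman m') hC hC'
  have := A.active_sub_passive_le_of_oscLEOn hm hosc hx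
  exact sub_nonpos.1 (this.trans (sub_nonpos.2 hpassive))
end
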